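/- arXiv:2511.02393 — 5 statements merged into one kernel-verified Lean document; each statement's English description precedes it below -/
import Mathlib

section
/- The constant R-matrix satisfies the quantum Yang–Baxter equation R_{q,s}^{12} · R_{q,s}^{13} · R_{q,s}^{23} = R_{q,s}^{23} · R_{q,s}^{13} · R_{q,s}^{12} as linear operators on V ⊗ V ⊗ V. -/
namespace Stmt1

noncomputable section

/-- `(-1)^x` for `x : ZMod 2`. -/
def neg1 (x : ZMod 2) : ℂ := if x = 0 then 1 else -1

variable {Nn : ℕ}

/-- `q_i = q^{d_i}` where `d_i = (-1)^{s_i}`. -/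
def qp (q : ℂ) (s : Fin Nn → ZMod 2) (i : Fin Nn) : ℂ := if s i = 0 then q else q⁻¹

/-- Coefficient of `E a b ⊗ E c d` in the constant R-matrix
`R_{q,s} = Σ_{i,j} q_i^{δ_{ij}} E_{ii} ⊗ E_{jj} + Σ_{i<j} (q_i − q_i^{−1}) E_{ji} ⊗ E_{ij}`. -/
def Rconst (q : ℂ) (s : Fin Nn → ZMod 2) (a b c d : Fin Nn) : ℂ :=
  (if a = b ∧ c = d then (if a = c then qp q s a else 1) else 0)
  + (if b = c ∧ a = d ∧ b < a then qp q s b - (qp q s b)⁻¹ else 0)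

/-- `X^{12}` on `V ⊗ V ⊗ V` with Koszul signs, for `X = Σ c(i,j,k,l) E i j ⊗ E k l`. -/
def op12 (s : Fin Nn → ZMod 2) (c : Fin Nn → Fin Nn → Fin Nn → Fin Nn → ℂ) :
    Matrix (Fin Nn × Fin Nn × Fin Nn) (Fin Nn × Fin Nn × Fin Nn) ℂ :=
  Matrix.of fun r co =>
    if r.2.2 = co.2.2 then
      c r.1 co.1 r.2.1 co.2.1 * neg1 ((s r.2.1 + s co.2.1) * s co.1)
    else 0

/-- `X^{13}` on `V ⊗ V ⊗ V` with Koszul signs. -/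
def op13 (s : Fin Nn → ZMod 2) (c : Fin Nn → Fin Nn → Fin Nn → Fin Nn → ℂ) :
    Matrix (Fin Nn × Fin Nn × Fin Nn) (Fin Nn × Fin Nn × Fin Nn) ℂ :=
  Matrix.of fun r co =>
    if r.2.1 = co.2.1 then
      c r.1 co.1 r.2.2 co.2.2 * neg1 ((s r.2.2 + s co.2.2) * (s co.1 + s co.2.1))
    else 0

/-- `X^{23}` on `V ⊗ V ⊗ V` with Koszul signs. -/
def op23 (s : Fin Nn → ZMod 2) (c : Fin Nn → Fin Nn → Fin Nn → Fin Nn → ℂ) :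
    Matrix (Fin Nn × Fin Nn × Fin Nn) (Fin Nn × Fin Nn × Fin Nn) ℂ :=
  Matrix.of fun r co =>
    if r.1 = co.1 then
      c r.2.1 co.2.1 r.2.2 co.2.2 *
        neg1 ((s r.2.1 + s co.2.1) * s co.1 + (s r.2.2 + s co.2.2) * (s co.1 + s co.2.1))
    else 0

-- auxiliary definitions and lemmas
set_option maxRecDepth 10000
set_option maxHeartbeats 4000000

abbrev Idx (Nn : ℕ) := Fin Nn × Fin Nn × Fin Nn

def pmat (π : Idx Nn → Idx Nn) (g : Idx Nn → ℂ) : Matrix (Idx Nn) (Idx Nn) ℂ :=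
  Matrix.of fun r co => if co = π r then g r else 0

lemma pmat_mul (π π' : Idx Nn → Idx Nn) (g g' : Idx Nn → ℂ) :
    pmat π g * pmat π' g' = pmat (π' ∘ π) (fun r => g r * g' (π r)) := by
  ext r co
  simp only [pmat, Matrix.mul_apply, Matrix.of_apply, Function.comp]
  rw [Finset.sum_eq_single (π r)]
  · simp
  · intro b _ hb; simp [hb]
  · simp

variable (q : ℂ) (s : Fin Nn → ZMod 2)

def tq (i : Fin Nn) : ℂ := qp q s i - (qp q s i)⁻¹

def D1 : Idx Nn → ℂ := fun r => if r.1 = r.2.1 then qp q s r.1 else 1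
def D2 : Idx Nn → ℂ := fun r => if r.1 = r.2.2 then qp q s r.1 else 1
def D3 : Idx Nn → ℂ := fun r => if r.2.1 = r.2.2 then qp q s r.2.1 else 1

def T1 : Idx Nn → ℂ := fun r =>
  if r.2.1 < r.1 then tq q s r.2.1 * neg1 ((s r.2.1 + s r.1) * s r.2.1) else 0
def T2 : Idx Nn → ℂ := fun r =>
  if r.2.2 < r.1 then tq q s r.2.2 * neg1 ((s r.2.2 + s r.1) * (s r.2.2 + s r.2.1)) else 0
def T3 : Idx Nn → ℂ := fun r =>
  if r.2.2 < r.2.1 then tq q s r.2.2 *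
    neg1 ((s r.2.1 + s r.2.2) * s r.1 + (s r.2.2 + s r.2.1) * (s r.1 + s r.2.2)) else 0

def sw1 : Idx Nn → Idx Nn := fun r => (r.2.1, r.1, r.2.2)
def sw2 : Idx Nn → Idx Nn := fun r => (r.2.2, r.2.1, r.1)
def sw3 : Idx Nn → Idx Nn := fun r => (r.1, r.2.2, r.2.1)

@[simp] lemma neg1_zero : neg1 0 = 1 := by simp [neg1]
@[simp] lemma neg1_addself (x y : ZMod 2) : neg1 ((x + x) * y) = 1 := by
  simp [neg1, CharTwo.add_self_eq_zero]

lemma op12_eq : op12 s (Rconst q s) = pmat id (D1 q s) + pmat sw1 (T1 q s) := by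
  ext r co
  rcases r with ⟨a, b, c⟩; rcases co with ⟨a', b', c'⟩
  simp only [op12, Rconst, pmat, Matrix.of_apply, Matrix.add_apply, D1, T1, sw1, id,
    Prod.mk.injEq, tq]
  split_ifs <;>
    first
      | rfl
      | omega
      | (try casesm* _ ∧ _
         subst_vars
         simp only [neg1_addself, CharTwo.add_self_eq_zero, zero_mul, mul_zero, add_zero,
           zero_add, neg1_zero, mul_one, one_mul]
         try ring)


lemma op13_eq : op13 s (Rconst q s) = pmat id (D2 q s) + pmat sw2 (T2 q s) := by
  ext r co
  rcases r with ⟨a, b, c⟩; rcases co with ⟨a', b', c'⟩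
  simp only [op13, Rconst, pmat, Matrix.of_apply, Matrix.add_apply, D2, T2, sw2, id,
    Prod.mk.injEq, tq]
  split_ifs <;>
    first
      | rfl
      | omega
      | (try casesm* _ ∧ _
         subst_vars
         simp only [neg1_addself, CharTwo.add_self_eq_zero, zero_mul, mul_zero, add_zero,
           zero_add, neg1_zero, mul_one, one_mul]
         try ring)


lemma op23_eq : op23 s (Rconst q s) = pmat id (D3 q s) + pmat sw3 (T3 q s) := by
  ext r co
  rcases r with ⟨a, b, c⟩; rcases co with ⟨a', b', c'⟩
  simp only [op23, Rconst, pmat, Matrix.of_apply, Matrix.add_apply, D3, T3, sw3, id,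
    Prod.mk.injEq, tq]
  split_ifs <;>
    first
      | rfl
      | omega
      | (try casesm* _ ∧ _
         subst_vars
         simp only [neg1_addself, CharTwo.add_self_eq_zero, zero_mul, mul_zero, add_zero,
           zero_add, neg1_zero, mul_one, one_mul]
         try ring)


@[simp] lemma neg1_one : neg1 1 = -1 := by norm_num [neg1]

/-- The constant R-matrix satisfies the quantum Yang–Baxter equation
`R^{12} R^{13} R^{23} = R^{23} R^{13} R^{12}` as linear operators on `V ⊗ V ⊗ V`. -/
theorem constant_yang_baxter (m n Nn : ℕ) (hNn : Nn = m + n) (hN2 : 2 ≤ Nn)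
    (s : Fin Nn → ZMod 2)
    (hm : (Finset.univ.filter (fun i => s i = 0)).card = m)
    (hn : (Finset.univ.filter (fun i => s i = 1)).card = n)
    (q : ℂ) (hq0 : q ≠ 0) (hqru : ∀ k : ℕ, k ≠ 0 → q ^ k ≠ 1) :
    op12 s (Rconst q s) * op13 s (Rconst q s) * op23 s (Rconst q s)
      = op23 s (Rconst q s) * op13 s (Rconst q s) * op12 s (Rconst q s) := by
  have hz : ∀ x : ZMod 2, x = 0 ∨ x = 1 := by decide
  have h11 : (1 : ZMod 2) + 1 = 0 := by decide
  rw [op12_eq, op13_eq, op23_eq]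
  simp only [add_mul, mul_add, pmat_mul]
  ext ⟨a, b, c⟩ ⟨a', b', c'⟩
  simp only [Matrix.add_apply, pmat, Matrix.of_apply, Function.comp, id_eq, sw1, sw2, sw3,
    D1, D2, D3, T1, T2, T3, Prod.mk.injEq, tq]
  rcases lt_trichotomy a b with hab | hab | hab <;>
    rcases lt_trichotomy b c with hbc | hbc | hbc <;>
    rcases lt_trichotomy a c with hac | hac | hac <;>
  first
    | (exfalso; omega)
    | (try simp only [show a = b from by omega]
       try simp only [show a = c from by omega]
       try simp only [show b = c from by omega]
       try simp only [show a < b from by omega]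
       try simp only [show ¬ a < b from by omega]
       try simp only [show b < a from by omega]
       try simp only [show ¬ b < a from by omega]
       try simp only [show a < c from by omega]
       try simp only [show ¬ a < c from by omega]
       try simp only [show c < a from by omega]
       try simp only [show ¬ c < a from by omega]
       try simp only [show b < c from by omega]
       try simp only [show ¬ b < c from by omega]
       try simp only [show c < b from by omega]
       try simp only [show ¬ c < b from by omega]
       try simp only [show ¬ a = b from by omega]
       try simp only [show ¬ b = a from by omega]
       try simp only [show ¬ a = c from by omega]
       try simp only [show ¬ c = a from by omega]
       try simp only [show ¬ b = c from by omega]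
       try simp only [show ¬ c = b from by omega]
       try simp only [eq_self_iff_true, lt_self_iff_false, if_true, if_false, ite_true, ite_false,
         true_and, and_true, false_and, and_false, mul_zero, zero_mul, mul_one, one_mul,
         add_zero, zero_add]
       all_goals ((try split_ifs) <;>
         first
           | rfl
           | (exfalso; omega)
           | (rcases hz (s a) with ha | ha <;> rcases hz (s b) with hb | hb <;>
                rcases hz (s c) with hc | hc <;>
              simp only [ha, hb, hc, qp, neg1_zero, neg1_one, h11, add_zero, zero_add,
                mul_zero, zero_mul, mul_one, one_mul, if_true, if_false, ite_true, ite_false,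
                eq_self_iff_true, one_ne_zero, inv_inv] <;>
              first
                | ring1
                | (field_simp <;> ring1))))

end

end Stmt1
end

section
/- For all u, v ∈ ℂ one has R_{q,s}(u,v) · R_{q^{−1},s}(u,v) = R_{q^{−1},s}(u,v) · R_{q,s}(u,v) = ((u − v)^2 − (q − q^{−1})^2 · u v) · id as operators on V ⊗ V. -/
namespace Stmt3

noncomputable section

/-- `(-1)^x` for `x : ZMod 2`. -/
def neg1 (x : ZMod 2) : ℂ := if x = 0 then 1 else -1

variable {Nn : ℕ}

/-- `q_i = q^{d_i}` where `d_i = (-1)^{s_i}`. -/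
def qp (q : ℂ) (s : Fin Nn → ZMod 2) (i : Fin Nn) : ℂ := if s i = 0 then q else q⁻¹

/-- Coefficient of `E a b ⊗ E c d` in the spectral R-matrix `R_{q,s}(u,v)`. -/
def Rspec (q : ℂ) (s : Fin Nn → ZMod 2) (u v : ℂ) (a b c d : Fin Nn) : ℂ :=
  (if a = b ∧ c = d then (if a = c then u * qp q s a - v * (qp q s a)⁻¹ else u - v) else 0)
  + (if c = b ∧ d = a ∧ a ≠ b then
      (if b < a then u * (qp q s b - (qp q s b)⁻¹) else v * (qp q s b - (qp q s b)⁻¹)) else 0)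

/-- A coefficient array regarded as an operator on `V ⊗ V` via the Koszul sign rule. -/
def op2 (s : Fin Nn → ZMod 2) (c : Fin Nn → Fin Nn → Fin Nn → Fin Nn → ℂ) :
    Matrix (Fin Nn × Fin Nn) (Fin Nn × Fin Nn) ℂ :=
  Matrix.of fun r co => c r.1 co.1 r.2 co.2 * neg1 ((s r.2 + s co.2) * s co.1)

lemma sum2 (G : Fin Nn → Fin Nn → ℂ) (p r : Fin Nn) :
    (∑ k : Fin Nn, ∑ l : Fin Nn, if k = p ∧ l = r then G k l else 0) = G p r := by
  simp [ite_and, Finset.sum_ite_eq']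

lemma collapse (f X Y : Fin Nn → Fin Nn → ℂ) (a b : Fin Nn) :
    (∑ k : Fin Nn, ∑ l : Fin Nn,
      ((if a = k ∧ b = l then X k l else 0) + if b = k ∧ l = a ∧ a ≠ k then Y k l else 0) * f k l)
    = X a b * f a b + if a ≠ b then Y b a * f b a else 0 := by
  have h : ∀ k l : Fin Nn,
      ((if a = k ∧ b = l then X k l else 0) + if b = k ∧ l = a ∧ a ≠ k then Y k l else 0) * f k l
      = (if k = a ∧ l = b then X k l * f k l else 0)
        + (if k = b ∧ l = a then (if a = b then (0:ℂ) else Y k l * f k l) else 0) := by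
    intro k l
    by_cases h1 : k = a ∧ l = b <;> by_cases h2 : k = b ∧ l = a
    · have hab : a = b := h1.1 ▸ h2.1.symm ▸ rfl
      rw [if_pos ⟨h1.1.symm, h1.2.symm⟩, if_neg (by rintro ⟨-, -, hne⟩; exact hne h1.1.symm),
        if_pos h1, if_pos h2, if_pos hab]
      ring
    · rw [if_pos ⟨h1.1.symm, h1.2.symm⟩, if_neg (by rintro ⟨hkb, hla, -⟩; exact h2 ⟨hkb.symm, hla⟩),
        if_pos h1, if_neg h2]
      ring
    · have hab : a ≠ b := by rintro rfl; exact h1 ⟨h2.1, h2.2⟩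
      rw [if_neg (by rintro ⟨hak, hbl⟩; exact h1 ⟨hak.symm, hbl.symm⟩),
        if_pos ⟨h2.1.symm, h2.2, h2.1 ▸ hab⟩, if_neg h1, if_pos h2, if_neg hab]
      ring
    · rw [if_neg (by rintro ⟨hak, hbl⟩; exact h1 ⟨hak.symm, hbl.symm⟩),
        if_neg (by rintro ⟨hkb, hla, -⟩; exact h2 ⟨hkb.symm, hla⟩), if_neg h1, if_neg h2]
      ring
  simp only [h, Finset.sum_add_distrib]
  rw [sum2 (fun k l => X k l * f k l), sum2 (fun k l => if a = b then (0:ℂ) else Y k l * f k l)]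
  by_cases hab : a = b <;> simp [hab]

set_option maxHeartbeats 1000000 in
lemma key (s : Fin Nn → ZMod 2) (q : ℂ) (hq0 : q ≠ 0) (u v : ℂ) :
    op2 s (Rspec q s u v) * op2 s (Rspec q⁻¹ s u v)
      = ((u - v) ^ 2 - (q - q⁻¹) ^ 2 * u * v) • (1 : Matrix (Fin Nn × Fin Nn) (Fin Nn × Fin Nn) ℂ) := by
  ext ⟨a, b⟩ ⟨c, d⟩
  rw [Matrix.mul_apply, Fintype.sum_prod_type]
  set f : Fin Nn → Fin Nn → ℂ := fun k l =>
    neg1 ((s b + s l) * s k) * (Rspec q⁻¹ s u v k c l d * neg1 ((s l + s d) * s c)) with hf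
  have hstep : (∑ k : Fin Nn, ∑ l : Fin Nn,
      op2 s (Rspec q s u v) (a, b) (k, l) * op2 s (Rspec q⁻¹ s u v) (k, l) (c, d))
      = ∑ k : Fin Nn, ∑ l : Fin Nn,
        ((if a = k ∧ b = l then (if a = b then u * qp q s a - v * (qp q s a)⁻¹ else u - v) else 0)
          + if b = k ∧ l = a ∧ a ≠ k then
              (if k < a then u * (qp q s k - (qp q s k)⁻¹) else v * (qp q s k - (qp q s k)⁻¹))
            else 0) * f k l := by
    refine Finset.sum_congr rfl fun k _ => Finset.sum_congr rfl fun l _ => ?_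
    simp only [op2, Rspec, Matrix.of_apply, hf]
    ring

  rw [hstep, collapse]
  simp only [Matrix.smul_apply, Matrix.one_apply, smul_eq_mul, Prod.mk.injEq]
  have hz : ∀ x : ZMod 2, x = 0 ∨ x = 1 := by decide
  have h2 : (1 : ZMod 2) + 1 = 0 := rfl
  by_cases hab : a = b
  · subst hab
    by_cases hac : a = c
    · subst hac
      by_cases had : a = d
      · subst had
        rcases hz (s a) with hsa | hsa <;>
          simp [hf, Rspec, neg1, qp, hsa, h2] <;> field_simp <;> ring
      · simp [hf, Rspec, had, Ne.symm had]
    · simp [hf, Rspec, hac, Ne.symm hac]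
  · by_cases hac : a = c
    · subst hac
      by_cases hbd : b = d
      · subst hbd
        rcases lt_or_gt_of_ne hab with hlt | hlt <;>
          rcases hz (s a) with hsa | hsa <;> rcases hz (s b) with hsb | hsb <;>
          simp [hf, Rspec, neg1, qp, hsa, hsb, h2, hab, Ne.symm hab, hlt, hlt.asymm,
            not_lt.mpr hlt.le] <;> field_simp <;> ring
      · simp [hf, Rspec, hab, Ne.symm hab, hbd, Ne.symm hbd]
    · by_cases hbc : b = c
      · subst hbc
        by_cases had : a = d
        · subst had
          rcases hz (s a) with hsa | hsa <;> rcases hz (s b) with hsb | hsb <;>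
            by_cases hba : b < a <;>
            simp [hf, Rspec, neg1, qp, hsa, hsb, h2, hba, hab, Ne.symm hab, hac,
              Ne.symm hac] <;> field_simp <;> ring
        · simp [hf, Rspec, hab, Ne.symm hab, hac, Ne.symm hac, had, Ne.symm had]
      · simp [hf, Rspec, hac, Ne.symm hac, hbc, Ne.symm hbc]

/-- `R_{q,s}(u,v) R_{q⁻¹,s}(u,v) = R_{q⁻¹,s}(u,v) R_{q,s}(u,v)
= ((u−v)² − (q−q⁻¹)² u v) · id` as operators on `V ⊗ V`. -/
theorem Rspec_mul_Rspec_inv (m n Nn : ℕ) (hNn : Nn = m + n) (hN2 : 2 ≤ Nn)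
    (s : Fin Nn → ZMod 2)
    (hm : (Finset.univ.filter (fun i => s i = 0)).card = m)
    (hn : (Finset.univ.filter (fun i => s i = 1)).card = n)
    (q : ℂ) (hq0 : q ≠ 0) (hqru : ∀ k : ℕ, k ≠ 0 → q ^ k ≠ 1)
    (u v : ℂ) :
    op2 s (Rspec q s u v) * op2 s (Rspec q⁻¹ s u v)
        = ((u - v) ^ 2 - (q - q⁻¹) ^ 2 * u * v) • (1 : Matrix (Fin Nn × Fin Nn) (Fin Nn × Fin Nn) ℂ) ∧
    op2 s (Rspec q⁻¹ s u v) * op2 s (Rspec q s u v)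
        = ((u - v) ^ 2 - (q - q⁻¹) ^ 2 * u * v) • (1 : Matrix (Fin Nn × Fin Nn) (Fin Nn × Fin Nn) ℂ) := by
  constructor
  · exact key s q hq0 u v
  · have h := key s q⁻¹ (inv_ne_zero hq0) u v
    rw [inv_inv] at h
    rw [h]
    congr 1
    ring

end

end Stmt3
end

section
/- Transition rule through an odd reflection, typical case: let 1 ≤ i ≤ N−1 with s_i ≠ s_{i+1}, and let V be an irreducible (simple) highest weight U_q(gl_{m|n,s})-module with highest weight Λ = (λ_1, …, λ_N) and maximal vector ζ. Assume λ_i^2 ≠ λ_{i+1}^2 (in the paper's normalization λ_j = q_j^{Λ_j} up to sign, this is the condition Λ_i + Λ_{i+1} ≠ 0). Then ω := t_{i+1,i} ζ is nonzero, and the transported module V^β over U_q(gl_{m|n,s′}) is an irreducible highest weight module with maximal vector ω whose highest weight equals, up to a sign twist, Λ^{[i]} := (λ_1, …, λ_{i−1}, q^{d_{i+1}} λ_{i+1}, q^{−d_i} λ_i, λ_{i+2}, …, λ_N). -/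
namespace Stmt9

noncomputable section

/-- `(-1)^x` for `x : ZMod 2`. -/
def neg1 (x : ZMod 2) : ℂ := if x = 0 then 1 else -1

/-- `q_i = q^{d_i}` where `d_i = (-1)^{s_i}`. -/
def qp (q : ℂ) (s : ℕ → ZMod 2) (i : ℕ) : ℂ := if s i = 0 then q else q⁻¹

/-- The sign `ς_{ab;cd} = (−1)^{(|a|+|b|)(|c|+|d|)}`. -/
def sg (s : ℕ → ZMod 2) (a b c d : ℕ) : ℂ := neg1 ((s a + s b) * (s c + s d))

/-- `i` lies in the index range `{1, …, Nn}`. -/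
def inR (Nn i : ℕ) : Prop := 1 ≤ i ∧ i ≤ Nn

/-- Generators of the RTT quantum general linear superalgebra. -/
inductive FGen : Type
  | t : ℕ → ℕ → FGen
  | tb : ℕ → ℕ → FGen

/-- The free algebra on the RTT generators. -/
abbrev FA : Type := FreeAlgebra ℂ FGen

/-- The generator `t_{ij}` in the free algebra. -/
def ft (i j : ℕ) : FA := FreeAlgebra.ι ℂ (FGen.t i j)

/-- The generator `t̄_{ij}` in the free algebra. -/
def fb (i j : ℕ) : FA := FreeAlgebra.ι ℂ (FGen.tb i j)

/-- Defining relations of the RTT quantum general linear superalgebra `U_q(gl_{m|n,s})`. -/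
inductive FRel (Nn : ℕ) (q : ℂ) (s : ℕ → ZMod 2) : FA → FA → Prop
  | zt : ∀ i j : ℕ, (¬ inR Nn i ∨ ¬ inR Nn j ∨ i < j) → FRel Nn q s (ft i j) 0
  | zb : ∀ i j : ℕ, (¬ inR Nn i ∨ ¬ inR Nn j ∨ j < i) → FRel Nn q s (fb i j) 0
  | unit_tb : ∀ i : ℕ, inR Nn i → FRel Nn q s (ft i i * fb i i) 1
  | unit_bt : ∀ i : ℕ, inR Nn i → FRel Nn q s (fb i i * ft i i) 1
  | rtt_tt : ∀ i j k l : ℕ, inR Nn i → inR Nn j → inR Nn k → inR Nn l →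
      FRel Nn q s
        ((if i = k then qp q s i else 1) • (ft i j * ft k l)
          - (sg s i j k l * (if j = l then qp q s j else 1)) • (ft k l * ft i j))
        ((sg s i k k l * (qp q s k - (qp q s k)⁻¹)
            * ((if j < l then (1 : ℂ) else 0) - (if k < i then (1 : ℂ) else 0))) • (ft k j * ft i l))
  | rtt_bb : ∀ i j k l : ℕ, inR Nn i → inR Nn j → inR Nn k → inR Nn l →
      FRel Nn q s
        ((if i = k then qp q s i else 1) • (fb i j * fb k l)
          - (sg s i j k l * (if j = l then qp q s j else 1)) • (fb k l * fb i j))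
        ((sg s i k k l * (qp q s k - (qp q s k)⁻¹)
            * ((if j < l then (1 : ℂ) else 0) - (if k < i then (1 : ℂ) else 0))) • (fb k j * fb i l))
  | rtt_tb : ∀ i j k l : ℕ, inR Nn i → inR Nn j → inR Nn k → inR Nn l →
      FRel Nn q s
        ((if i = k then qp q s i else 1) • (ft i j * fb k l)
          - (sg s i j k l * (if j = l then qp q s j else 1)) • (fb k l * ft i j))
        ((sg s i k k l * (qp q s k - (qp q s k)⁻¹)) •
          ((if j < l then (1 : ℂ) else 0) • (fb k j * ft i l)
            - (if k < i then (1 : ℂ) else 0) • (ft k j * fb i l)))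

/-- The RTT quantum general linear superalgebra `U_q(gl_{m|n,s})`. -/
abbrev UF (Nn : ℕ) (q : ℂ) (s : ℕ → ZMod 2) : Type := RingQuot (FRel Nn q s)

/-- The generator `t_{ij}` of `U_q(gl_{m|n,s})` (zero for `i < j` or out-of-range indices). -/
def Tt (Nn : ℕ) (q : ℂ) (s : ℕ → ZMod 2) (i j : ℕ) : UF Nn q s :=
  RingQuot.mkAlgHom ℂ (FRel Nn q s) (ft i j)

/-- The generator `t̄_{ij}` of `U_q(gl_{m|n,s})` (zero for `j < i` or out-of-range indices). -/
def Tb (Nn : ℕ) (q : ℂ) (s : ℕ → ZMod 2) (i j : ℕ) : UF Nn q s :=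
  RingQuot.mkAlgHom ℂ (FRel Nn q s) (fb i j)

/-- The defining clauses of the odd-reflection isomorphism
`β_{i,s} : U_q(gl_{m|n,s}) → U_q(gl_{m|n,s′})` on the RTT generators
(here `s′ = σ_i(s)`). -/
def OddReflClauses (Nn : ℕ) (q : ℂ) (s s' : ℕ → ZMod 2) (i : ℕ)
    (f : UF Nn q s ≃ₐ[ℂ] UF Nn q s') : Prop :=
  f (Tt Nn q s i i) = neg1 (s' i) • Tt Nn q s' (i + 1) (i + 1) ∧
  f (Tt Nn q s (i + 1) (i + 1)) = neg1 (s' (i + 1)) • Tt Nn q s' i i ∧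
  f (Tt Nn q s (i + 1) i)
    = (neg1 (s' i) * neg1 (s' (i + 1)) * (qp q s' i)⁻¹) •
        (Tb Nn q s' i (i + 1) * (Tt Nn q s' i i * Tt Nn q s' i i)) ∧
  (∀ k : ℕ, k < i →
    f (Tt Nn q s i k)
      = (sg s' (i - 1) i i (i + 1) * (qp q s' i)⁻¹) • Tt Nn q s' (i + 1) k
        - (sg s' k (i - 1) i (i + 1)) •
            (Tb Nn q s' i i * Tt Nn q s' (i + 1) i * Tt Nn q s' i k)) ∧
  (∀ k : ℕ, k < i →
    f (Tt Nn q s (i + 1) k)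
      = (-(sg s' (i - 1) i i (i + 1) * neg1 (s' (i + 1)))) • Tt Nn q s' i k) ∧
  (∀ l : ℕ, i + 2 ≤ l →
    f (Tt Nn q s l i)
      = (sg s' i (i + 1) i (i + 2) * qp q s' i) • Tt Nn q s' l (i + 1)
        - (sg s' i (i + 1) (i + 2) l) •
            (Tt Nn q s' i i * Tt Nn q s' l i * Tb Nn q s' i (i + 1))) ∧
  (∀ l : ℕ, i + 2 ≤ l →
    f (Tt Nn q s l (i + 1))
      = (-(sg s' i (i + 1) (i + 1) (i + 2) * neg1 (s' (i + 1)))) • Tt Nn q s' l i) ∧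
  (∀ l k : ℕ, ¬ (l = i ∧ k = i) → ¬ (l = i + 1 ∧ k = i + 1) → ¬ (l = i + 1 ∧ k = i) →
    ¬ (l = i ∧ k < i) → ¬ (l = i + 1 ∧ k < i) →
    ¬ (k = i ∧ i + 2 ≤ l) → ¬ (k = i + 1 ∧ i + 2 ≤ l) →
    f (Tt Nn q s l k) = Tt Nn q s' l k) ∧
  f (Tb Nn q s i i) = neg1 (s' i) • Tb Nn q s' (i + 1) (i + 1) ∧
  f (Tb Nn q s (i + 1) (i + 1)) = neg1 (s' (i + 1)) • Tb Nn q s' i i ∧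
  f (Tb Nn q s i (i + 1))
    = (qp q s' i) • (Tb Nn q s' i i * Tb Nn q s' i i * Tt Nn q s' (i + 1) i) ∧
  (∀ k : ℕ, k < i →
    f (Tb Nn q s k i)
      = (sg s' (i - 1) i i (i + 1) * neg1 (s' i) * qp q s' i) • Tb Nn q s' k (i + 1)
        - (sg s' k (i - 1) i (i + 1) * neg1 (s' i)) •
            (Tb Nn q s' k i * Tb Nn q s' i (i + 1) * Tt Nn q s' i i)) ∧
  (∀ k : ℕ, k < i →
    f (Tb Nn q s k (i + 1)) = (-(sg s' (i - 1) i i (i + 1))) • Tb Nn q s' k i) ∧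
  (∀ l : ℕ, i + 2 ≤ l →
    f (Tb Nn q s i l)
      = (sg s' i (i + 1) i (i + 2) * neg1 (s' i) * (qp q s' i)⁻¹) • Tb Nn q s' (i + 1) l
        - (sg s' i (i + 1) (i + 2) l * neg1 (s' i)) •
            (Tt Nn q s' (i + 1) i * Tb Nn q s' i l * Tb Nn q s' i i)) ∧
  (∀ l : ℕ, i + 2 ≤ l →
    f (Tb Nn q s (i + 1) l) = (-(sg s' i (i + 1) (i + 1) (i + 2))) • Tb Nn q s' i l) ∧
  (∀ k l : ℕ, ¬ (k = i ∧ l = i) → ¬ (k = i + 1 ∧ l = i + 1) → ¬ (k = i ∧ l = i + 1) →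
    ¬ (l = i ∧ k < i) → ¬ (l = i + 1 ∧ k < i) →
    ¬ (k = i ∧ i + 2 ≤ l) → ¬ (k = i + 1 ∧ i + 2 ≤ l) →
    f (Tb Nn q s k l) = Tb Nn q s' k l)


section Helpers

variable {Nn : ℕ} {q : ℂ} {s : ℕ → ZMod 2}

lemma neg1_mul_self (x : ZMod 2) : neg1 x * neg1 x = 1 := by
  unfold neg1; split <;> ring

lemma neg1_ne_zero (x : ZMod 2) : neg1 x ≠ 0 := by
  unfold neg1; split <;> norm_num

lemma neg1_inv (x : ZMod 2) : (neg1 x)⁻¹ = neg1 x := by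
  unfold neg1; split <;> norm_num

lemma neg1_cases (x : ZMod 2) : neg1 x = 1 ∨ neg1 x = -1 := by
  unfold neg1; split
  · exact Or.inl rfl
  · exact Or.inr rfl

lemma sg_mul_self (s : ℕ → ZMod 2) (a b c d : ℕ) : sg s a b c d * sg s a b c d = 1 :=
  neg1_mul_self _

lemma sg_ne_zero (s : ℕ → ZMod 2) (a b c d : ℕ) : sg s a b c d ≠ 0 := neg1_ne_zero _

lemma sg_right_diag (s : ℕ → ZMod 2) (a b c : ℕ) : sg s a b c c = 1 := by
  unfold sg
  have h : s c + s c = 0 := CharTwo.add_self_eq_zero (s c)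
  rw [h, mul_zero]
  simp [neg1]

lemma qp_ne_zero (hq0 : q ≠ 0) (i : ℕ) : qp q s i ≠ 0 := by
  unfold qp; split
  · exact hq0
  · exact inv_ne_zero hq0

lemma Tt_eq_zero (i j : ℕ) (h : ¬ inR Nn i ∨ ¬ inR Nn j ∨ i < j) :
    Tt Nn q s i j = 0 := by
  have := RingQuot.mkAlgHom_rel ℂ (FRel.zt (Nn := Nn) (q := q) (s := s) i j h)
  simpa [Tt, ft] using this

lemma Tb_eq_zero (i j : ℕ) (h : ¬ inR Nn i ∨ ¬ inR Nn j ∨ j < i) :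
    Tb Nn q s i j = 0 := by
  have := RingQuot.mkAlgHom_rel ℂ (FRel.zb (Nn := Nn) (q := q) (s := s) i j h)
  simpa [Tb, fb] using this

lemma Tt_mul_Tb (i : ℕ) (h : inR Nn i) :
    Tt Nn q s i i * Tb Nn q s i i = 1 := by
  have := RingQuot.mkAlgHom_rel ℂ (FRel.unit_tb (Nn := Nn) (q := q) (s := s) i h)
  simpa [Tt, Tb, ft, fb] using this

lemma Tb_mul_Tt (i : ℕ) (h : inR Nn i) :
    Tb Nn q s i i * Tt Nn q s i i = 1 := by
  have := RingQuot.mkAlgHom_rel ℂ (FRel.unit_bt (Nn := Nn) (q := q) (s := s) i h)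
  simpa [Tt, Tb, ft, fb] using this

lemma rel_tt (i j k l : ℕ) (hi : inR Nn i) (hj : inR Nn j) (hk : inR Nn k) (hl : inR Nn l) :
    (if i = k then qp q s i else 1) • (Tt Nn q s i j * Tt Nn q s k l)
      - (sg s i j k l * (if j = l then qp q s j else 1)) • (Tt Nn q s k l * Tt Nn q s i j)
    = (sg s i k k l * (qp q s k - (qp q s k)⁻¹)
        * ((if j < l then (1 : ℂ) else 0) - (if k < i then (1 : ℂ) else 0))) •
        (Tt Nn q s k j * Tt Nn q s i l) := by
  have := RingQuot.mkAlgHom_rel ℂ (FRel.rtt_tt (Nn := Nn) (q := q) (s := s) i j k l hi hj hk hl)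
  simpa [Tt, ft, map_sub, map_smul, map_mul, apply_ite (RingQuot.mkAlgHom ℂ (FRel Nn q s)), map_zero] using this

lemma rel_tb (i j k l : ℕ) (hi : inR Nn i) (hj : inR Nn j) (hk : inR Nn k) (hl : inR Nn l) :
    (if i = k then qp q s i else 1) • (Tt Nn q s i j * Tb Nn q s k l)
      - (sg s i j k l * (if j = l then qp q s j else 1)) • (Tb Nn q s k l * Tt Nn q s i j)
    = (sg s i k k l * (qp q s k - (qp q s k)⁻¹)) •
        ((if j < l then (1 : ℂ) else 0) • (Tb Nn q s k j * Tt Nn q s i l)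
          - (if k < i then (1 : ℂ) else 0) • (Tt Nn q s k j * Tb Nn q s i l)) := by
  have := RingQuot.mkAlgHom_rel ℂ (FRel.rtt_tb (Nn := Nn) (q := q) (s := s) i j k l hi hj hk hl)
  simpa [Tt, Tb, ft, fb, map_sub, map_smul, map_mul, apply_ite (RingQuot.mkAlgHom ℂ (FRel Nn q s)), map_zero] using this

end Helpers

section VHelpers

variable {Nn : ℕ} {q : ℂ} {s : ℕ → ZMod 2} {V : Type} [AddCommGroup V] [Module ℂ V]

lemma sg_left_diag (s : ℕ → ZMod 2) (a c d : ℕ) : sg s a a c d = 1 := by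
  unfold sg
  have h : s a + s a = 0 := CharTwo.add_self_eq_zero (s a)
  rw [h, zero_mul]
  simp [neg1]

lemma sg_odd (s : ℕ → ZMod 2) (a b c d : ℕ) (h1 : s a ≠ s b) (h2 : s c ≠ s d) :
    sg s a b c d = -1 := by
  have key : ∀ x y : ZMod 2, x ≠ y → x + y = 1 := by decide
  unfold sg
  rw [key _ _ h1, key _ _ h2, mul_one]
  simp [neg1]

lemma smul_cancel {V : Type} [AddCommGroup V] [Module ℂ V] {a : ℂ} (ha : a ≠ 0) {x y : V}
    (h : a • x = y) : x = a⁻¹ • y := by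
  rw [← h, smul_smul, inv_mul_cancel₀ ha, one_smul]

lemma vrel_tt (ρ : UF Nn q s →ₐ[ℂ] Module.End ℂ V) (i j k l : ℕ)
    (hi : inR Nn i) (hj : inR Nn j) (hk : inR Nn k) (hl : inR Nn l) (v : V) :
    (if i = k then qp q s i else 1) • ρ (Tt Nn q s i j) (ρ (Tt Nn q s k l) v)
      - (sg s i j k l * (if j = l then qp q s j else 1)) • ρ (Tt Nn q s k l) (ρ (Tt Nn q s i j) v)
    = (sg s i k k l * (qp q s k - (qp q s k)⁻¹)
        * ((if j < l then (1 : ℂ) else 0) - (if k < i then (1 : ℂ) else 0))) •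
        ρ (Tt Nn q s k j) (ρ (Tt Nn q s i l) v) := by
  have h := rel_tt (Nn := Nn) (q := q) (s := s) i j k l hi hj hk hl
  have h2 := congrArg (fun x => ρ x v) h
  simpa only [map_sub, map_smul, map_mul, LinearMap.sub_apply, LinearMap.smul_apply,
    Module.End.mul_apply] using h2

lemma vrel_tb (ρ : UF Nn q s →ₐ[ℂ] Module.End ℂ V) (i j k l : ℕ)
    (hi : inR Nn i) (hj : inR Nn j) (hk : inR Nn k) (hl : inR Nn l) (v : V) :
    (if i = k then qp q s i else 1) • ρ (Tt Nn q s i j) (ρ (Tb Nn q s k l) v)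
      - (sg s i j k l * (if j = l then qp q s j else 1)) • ρ (Tb Nn q s k l) (ρ (Tt Nn q s i j) v)
    = (sg s i k k l * (qp q s k - (qp q s k)⁻¹)) •
        ((if j < l then (1 : ℂ) else 0) • ρ (Tb Nn q s k j) (ρ (Tt Nn q s i l) v)
          - (if k < i then (1 : ℂ) else 0) • ρ (Tt Nn q s k j) (ρ (Tb Nn q s i l) v)) := by
  have h := rel_tb (Nn := Nn) (q := q) (s := s) i j k l hi hj hk hl
  have h2 := congrArg (fun x => ρ x v) h
  simpa only [map_sub, map_smul, map_mul, LinearMap.sub_apply, LinearMap.smul_apply,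
    Module.End.mul_apply, smul_sub] using h2

end VHelpers

/-- Transition rule through an odd reflection, typical case. -/
theorem odd_reflection_transition_typical (m n Nn : ℕ) (hNn : Nn = m + n) (hN2 : 2 ≤ Nn)
    (s : ℕ → ZMod 2)
    (hm : ((Finset.Icc 1 Nn).filter (fun i => s i = 0)).card = m)
    (hn : ((Finset.Icc 1 Nn).filter (fun i => s i = 1)).card = n)
    (q : ℂ) (hq0 : q ≠ 0) (hqru : ∀ k : ℕ, k ≠ 0 → q ^ k ≠ 1)
    (i : ℕ) (hi1 : 1 ≤ i) (hi2 : i + 1 ≤ Nn) (hodd : s i ≠ s (i + 1))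
    (s' : ℕ → ZMod 2)
    (hs' : ∀ j : ℕ, s' j = if j = i then s (i + 1) else if j = i + 1 then s i else s j)
    (β : UF Nn q s ≃ₐ[ℂ] UF Nn q s') (hβ : OddReflClauses Nn q s s' i β)
    (V : Type) [AddCommGroup V] [Module ℂ V]
    (ρ : UF Nn q s →ₐ[ℂ] Module.End ℂ V)
    (lam : ℕ → ℂ) (hlam : ∀ j : ℕ, 1 ≤ j → j ≤ Nn → lam j ≠ 0)
    (ζ : V) (hζ : ζ ≠ 0)
    (hhw0 : ∀ j k : ℕ, 1 ≤ j → j < k → k ≤ Nn → ρ (Tb Nn q s j k) ζ = 0)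
    (hhw1 : ∀ j : ℕ, 1 ≤ j → j ≤ Nn → ρ (Tb Nn q s j j) ζ = lam j • ζ)
    (hgen : Function.Surjective (fun x : UF Nn q s => ρ x ζ))
    (hirr : ∀ W : Submodule ℂ V,
      (∀ (x : UF Nn q s) (w : V), w ∈ W → ρ x w ∈ W) → W = ⊥ ∨ W = ⊤)
    (htyp : lam i ^ 2 ≠ lam (i + 1) ^ 2) :
    ρ (Tt Nn q s (i + 1) i) ζ ≠ 0 ∧
    (∀ j k : ℕ, 1 ≤ j → j < k → k ≤ Nn →
      (ρ.comp β.symm.toAlgHom) (Tb Nn q s' j k) (ρ (Tt Nn q s (i + 1) i) ζ) = 0) ∧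
    (∃ ε : ℕ → ℂ, (∀ j : ℕ, ε j = 1 ∨ ε j = -1) ∧
      ∀ j : ℕ, 1 ≤ j → j ≤ Nn →
        (ρ.comp β.symm.toAlgHom) (Tb Nn q s' j j) (ρ (Tt Nn q s (i + 1) i) ζ)
          = (ε j * (if j = i then qp q s (i + 1) * lam (i + 1)
              else if j = i + 1 then (qp q s i)⁻¹ * lam i else lam j)) •
            (ρ (Tt Nn q s (i + 1) i) ζ)) ∧
    Function.Surjective
      (fun x : UF Nn q s' => (ρ.comp β.symm.toAlgHom) x (ρ (Tt Nn q s (i + 1) i) ζ)) ∧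
    (∀ W : Submodule ℂ V,
      (∀ (x : UF Nn q s') (w : V), w ∈ W → (ρ.comp β.symm.toAlgHom) x w ∈ W) →
      W = ⊥ ∨ W = ⊤) := by
  classical
  obtain ⟨hc1, hc2, hc3, hc4, hc5, hc6, hc7, hc8, hc9, hc10, hc11, hc12, hc13, hc14, hc15, hc16⟩ := hβ
  have hq2 : q ^ 2 ≠ 1 := hqru 2 (by norm_num)
  have hq4 : q ^ 4 ≠ 1 := hqru 4 (by norm_num)
  have hzm : ∀ x : ZMod 2, x = 0 ∨ x = 1 := by decide
  have hRi : inR Nn i := ⟨hi1, by omega⟩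
  have hRi1 : inR Nn (i + 1) := ⟨by omega, hi2⟩
  have hlami : lam i ≠ 0 := hlam i hi1 (by omega)
  have hlami1 : lam (i + 1) ≠ 0 := hlam (i + 1) (by omega) hi2
  -- scalar nonvanishing facts
  have hqpe : ∀ a : ℕ, qp q s a ≠ 0 := fun a => qp_ne_zero hq0 a
  have hqpe' : ∀ a : ℕ, qp q s' a ≠ 0 := fun a => qp_ne_zero hq0 a
  have hqmm : q - q⁻¹ ≠ 0 := by
    intro h
    apply hq2
    have h1 : q = q⁻¹ := sub_eq_zero.mp h
    rw [sq]
    nth_rewrite 2 [h1]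
    exact mul_inv_cancel₀ hq0
  have hqd : ∀ a : ℕ, qp q s a - (qp q s a)⁻¹ ≠ 0 := by
    intro a
    unfold qp
    split
    · exact hqmm
    · rw [inv_inv]
      intro h
      apply hqmm
      have h2 : -(q - q⁻¹) = 0 := by rw [← h]; ring
      exact neg_eq_zero.mp h2
  have hqsum : qp q s i + qp q s (i + 1) ≠ 0 := by
    have hqq : q + q⁻¹ ≠ 0 := by
      intro h
      apply hq4
      have h3 : q * q + 1 = (q + q⁻¹) * q := by
        rw [add_mul, inv_mul_cancel₀ hq0]
      have h4 : q * q + 1 = 0 := by rw [h3, h, zero_mul]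
      have h5 : q * q = -1 := by
        have := eq_neg_of_add_eq_zero_left h4
        exact this
      calc q ^ 4 = (q * q) * (q * q) := by ring
        _ = 1 := by rw [h5]; ring
    rcases hzm (s i) with h0 | h0
    · have h1 : s (i + 1) = 1 := by
        rcases hzm (s (i + 1)) with h | h
        · exact absurd (h0.trans h.symm) hodd
        · exact h
      simpa [qp, h0, h1] using hqq
    · have h1 : s (i + 1) = 0 := by
        rcases hzm (s (i + 1)) with h | h
        · exact h
        · exact absurd (h0.trans h.symm) hodd
      have : q⁻¹ + q ≠ 0 := by
        intro h; apply hqq; rw [add_comm] at h; exact h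
      simpa [qp, h0, h1] using this
  -- eigen facts for ζ
  have hTζ : ∀ j, 1 ≤ j → j ≤ Nn → ρ (Tt Nn q s j j) ζ = (lam j)⁻¹ • ζ := by
    intro j h1 h2
    have hu := Tt_mul_Tb (Nn := Nn) (q := q) (s := s) j ⟨h1, h2⟩
    have h3 := congrArg (fun x => ρ x ζ) hu
    simp only [map_mul, map_one, Module.End.mul_apply, Module.End.one_apply] at h3
    rw [hhw1 j h1 h2, map_smul] at h3
    calc ρ (Tt Nn q s j j) ζ = (lam j)⁻¹ • (lam j • ρ (Tt Nn q s j j) ζ) := by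
          rw [smul_smul, inv_mul_cancel₀ (hlam j h1 h2), one_smul]
      _ = (lam j)⁻¹ • ζ := by rw [h3]
  have hsgm : sg s (i + 1) i (i + 1) i = -1 := sg_odd s _ _ _ _ (Ne.symm hodd) (Ne.symm hodd)
  have hsgm2 : sg s (i + 1) i i (i + 1) = -1 := sg_odd s _ _ _ _ (Ne.symm hodd) hodd
  -- T_{i+1,i}^2 = 0 on ζ
  have hT2 : ρ (Tt Nn q s (i + 1) i) (ρ (Tt Nn q s (i + 1) i) ζ) = 0 := by
    have h := vrel_tt ρ (i + 1) i (i + 1) i hRi1 hRi hRi1 hRi ζ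
    rw [hsgm] at h
    simp only [lt_self_iff_false, if_false, if_true, sub_self, mul_zero, zero_smul] at h
    rw [neg_one_mul, neg_smul, sub_neg_eq_add, ← add_smul] at h
    rcases smul_eq_zero.mp h with hc | h0
    · exfalso; apply hqsum; rw [add_comm]; exact hc
    · exact h0

  -- simp cleanup set used repeatedly
  -- B_{ii} on ω
  have hBii : ρ (Tb Nn q s i i) (ρ (Tt Nn q s (i + 1) i) ζ)
      = ((qp q s i)⁻¹ * lam i) • ρ (Tt Nn q s (i + 1) i) ζ := by
    have h := vrel_tb ρ (i + 1) i i i hRi1 hRi hRi hRi ζ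
    rw [Tb_eq_zero (Nn := Nn) (q := q) (s := s) (i + 1) i (Or.inr (Or.inr (by omega))),
      hhw1 i hi1 (by omega), if_neg (show ¬ (i + 1 = i) by omega), if_pos rfl,
      if_neg (show ¬ (i < i) by omega), if_pos (show i < i + 1 by omega)] at h
    simp only [sg_right_diag, sg_left_diag, map_zero, LinearMap.zero_apply, map_smul,
      smul_zero, zero_smul, one_smul, one_mul, mul_one, zero_sub, sub_zero, neg_zero,
      neg_neg, neg_one_smul, sub_neg_eq_add, zero_add, add_zero, smul_neg] at h
    have h2 := sub_eq_zero.mp h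
    rw [smul_cancel (hqpe i) h2.symm, smul_smul]
  -- B_{i+1,i+1} on ω
  have hBi1 : ρ (Tb Nn q s (i + 1) (i + 1)) (ρ (Tt Nn q s (i + 1) i) ζ)
      = (qp q s (i + 1) * lam (i + 1)) • ρ (Tt Nn q s (i + 1) i) ζ := by
    have h := vrel_tb ρ (i + 1) i (i + 1) (i + 1) hRi1 hRi hRi1 hRi1 ζ
    rw [Tb_eq_zero (Nn := Nn) (q := q) (s := s) (i + 1) i (Or.inr (Or.inr (by omega))),
      hhw1 (i + 1) (by omega) hi2, if_pos rfl, if_neg (show ¬ (i = i + 1) by omega),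
      if_pos (show i < i + 1 by omega), if_neg (show ¬ (i + 1 < i + 1) by omega)] at h
    simp only [sg_right_diag, sg_left_diag, map_zero, LinearMap.zero_apply, map_smul,
      smul_zero, zero_smul, one_smul, one_mul, mul_one, zero_sub, sub_zero, neg_zero,
      neg_neg, neg_one_smul, sub_neg_eq_add, zero_add, add_zero, smul_neg] at h
    have h2 := (sub_eq_zero.mp h).symm
    rw [h2, smul_smul]
  -- B_{jj} on ω for other j
  have hBjj : ∀ j, 1 ≤ j → j ≤ Nn → j ≠ i → j ≠ i + 1 →
      ρ (Tb Nn q s j j) (ρ (Tt Nn q s (i + 1) i) ζ)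
        = lam j • ρ (Tt Nn q s (i + 1) i) ζ := by
    intro j h1 h2 hji hji1
    have hz : (if i < j then (1 : ℂ) else 0) • ρ (Tb Nn q s j i) (ρ (Tt Nn q s (i + 1) j) ζ)
        - (if j < i + 1 then (1 : ℂ) else 0) • ρ (Tt Nn q s j i) (ρ (Tb Nn q s (i + 1) j) ζ)
        = 0 := by
      by_cases hj2 : j < i
      · rw [if_neg (show ¬ (i < j) by omega),
          Tt_eq_zero (Nn := Nn) (q := q) (s := s) j i (Or.inr (Or.inr hj2)), map_zero]
        simp
      · have hj3 : i + 2 ≤ j := by omega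
        rw [Tt_eq_zero (Nn := Nn) (q := q) (s := s) (i + 1) j (Or.inr (Or.inr (by omega))),
          if_neg (show ¬ (j < i + 1) by omega), map_zero]
        simp
    have h := vrel_tb ρ (i + 1) i j j hRi1 hRi ⟨h1, h2⟩ ⟨h1, h2⟩ ζ
    rw [hz, hhw1 j h1 h2, if_neg (show ¬ (i + 1 = j) by omega),
      if_neg (show ¬ (i = j) by omega)] at h
    simp only [sg_right_diag, sg_left_diag, map_zero, LinearMap.zero_apply, map_smul,
      smul_zero, zero_smul, one_smul, one_mul, mul_one, zero_sub, sub_zero, neg_zero,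
      neg_neg, neg_one_smul, sub_neg_eq_add, zero_add, add_zero, smul_neg] at h
    exact (sub_eq_zero.mp h).symm
  -- the key nonvanishing: B_{i,i+1} ω is a nonzero multiple of ζ
  have hC : ρ (Tb Nn q s i (i + 1)) (ρ (Tt Nn q s (i + 1) i) ζ)
      = (-(qp q s i - (qp q s i)⁻¹) * ((lam (i + 1))⁻¹ * lam i - lam (i + 1) * (lam i)⁻¹)) • ζ := by
    have h := vrel_tb ρ (i + 1) i i (i + 1) hRi1 hRi hRi hRi1 ζ
    rw [hhw0 i (i + 1) hi1 (by omega) hi2, hTζ (i + 1) (by omega) hi2,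
      hhw1 (i + 1) (by omega) hi2, hsgm2, if_neg (show ¬ (i + 1 = i) by omega),
      if_neg (show ¬ (i = i + 1) by omega), if_pos (show i < i + 1 by omega)] at h
    simp only [map_zero, LinearMap.zero_apply, map_smul, smul_zero, zero_smul, one_smul,
      one_mul, mul_one, zero_sub, sub_zero, neg_zero, neg_neg, neg_one_smul,
      sub_neg_eq_add, zero_add, add_zero, smul_neg] at h
    rw [hhw1 i hi1 (by omega), hTζ i hi1 (by omega)] at h
    rw [h]
    module
  have hcne : (-(qp q s i - (qp q s i)⁻¹) * ((lam (i + 1))⁻¹ * lam i - lam (i + 1) * (lam i)⁻¹)) ≠ 0 := by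
    apply mul_ne_zero
    · exact neg_ne_zero.mpr (hqd i)
    · intro h
      apply htyp
      have h1 : (lam (i + 1))⁻¹ * lam i = lam (i + 1) * (lam i)⁻¹ := sub_eq_zero.mp h
      field_simp at h1
      rw [sq, sq]
      linear_combination h1
  have hωne : ρ (Tt Nn q s (i + 1) i) ζ ≠ 0 := by
    intro h0
    rw [h0, map_zero] at hC
    rcases smul_eq_zero.mp hC.symm with h | h
    · exact hcne h
    · exact hζ h
  -- vanishing facts on ω
  -- vanishing facts on ω
  have fH1 : ∀ k, 1 ≤ k → k < i → ρ (Tb Nn q s k (i + 1)) (ρ (Tt Nn q s (i + 1) i) ζ) = 0 := by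
    intro k h1 h2
    have h := vrel_tb ρ (i + 1) i k (i + 1) hRi1 hRi ⟨h1, by omega⟩ hRi1 ζ
    rw [hhw0 k (i + 1) h1 (by omega) hi2, hTζ (i + 1) (by omega) hi2,
      Tt_eq_zero (Nn := Nn) (q := q) (s := s) k i (Or.inr (Or.inr h2)),
      if_neg (show ¬ (i + 1 = k) by omega), if_neg (show ¬ (i = i + 1) by omega),
      if_pos (show i < i + 1 by omega), if_pos (show k < i + 1 by omega)] at h
    simp only [map_zero, LinearMap.zero_apply, map_smul, smul_zero, zero_smul, one_smul,
      one_mul, mul_one, zero_sub, sub_zero, neg_zero, neg_neg, neg_one_smul,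
      sub_neg_eq_add, zero_add, add_zero, smul_neg] at h
    rw [hhw0 k i h1 h2 (by omega)] at h
    simp only [smul_zero, neg_eq_zero, smul_eq_zero] at h
    exact h.resolve_left (sg_ne_zero s (i + 1) i k (i + 1))
  have fH2 : ∀ k, 1 ≤ k → k < i → ρ (Tb Nn q s k i) (ρ (Tt Nn q s (i + 1) i) ζ) = 0 := by
    intro k h1 h2
    have h := vrel_tb ρ (i + 1) i k i hRi1 hRi ⟨h1, by omega⟩ hRi ζ
    rw [hhw0 k i h1 h2 (by omega),
      Tt_eq_zero (Nn := Nn) (q := q) (s := s) k i (Or.inr (Or.inr h2)),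
      if_neg (show ¬ (i + 1 = k) by omega), if_pos rfl,
      if_neg (show ¬ (i < i) by omega), if_pos (show k < i + 1 by omega)] at h
    simp only [map_zero, LinearMap.zero_apply, map_smul, smul_zero, zero_smul, one_smul,
      one_mul, mul_one, zero_sub, sub_zero, neg_zero, neg_neg, neg_one_smul,
      sub_neg_eq_add, zero_add, add_zero, smul_neg, neg_eq_zero, smul_eq_zero] at h
    rcases h with h' | h'
    · exact absurd h' (fun hh => (mul_ne_zero (sg_ne_zero s (i + 1) i k i) (hqpe i)) hh)
    · exact h'
  have fH3 : ∀ l, i + 2 ≤ l → l ≤ Nn → ρ (Tb Nn q s (i + 1) l) (ρ (Tt Nn q s (i + 1) i) ζ) = 0 := by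
    intro l h1 h2
    have h := vrel_tb ρ (i + 1) i (i + 1) l hRi1 hRi hRi1 ⟨by omega, h2⟩ ζ
    rw [hhw0 (i + 1) l (by omega) (by omega) h2,
      Tb_eq_zero (Nn := Nn) (q := q) (s := s) (i + 1) i (Or.inr (Or.inr (by omega))),
      if_pos rfl, if_neg (show ¬ (i = l) by omega),
      if_pos (show i < l by omega), if_neg (show ¬ (i + 1 < i + 1) by omega)] at h
    simp only [map_zero, LinearMap.zero_apply, map_smul, smul_zero, zero_smul, one_smul,
      one_mul, mul_one, zero_sub, sub_zero, neg_zero, neg_neg, neg_one_smul,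
      sub_neg_eq_add, zero_add, add_zero, smul_neg, neg_eq_zero, smul_eq_zero] at h
    rcases h with h' | h'
    · exact absurd h' (sg_ne_zero s (i + 1) i (i + 1) l)
    · exact h'
  have fH4 : ∀ l, i + 2 ≤ l → l ≤ Nn → ρ (Tb Nn q s i l) (ρ (Tt Nn q s (i + 1) i) ζ) = 0 := by
    intro l h1 h2
    have h := vrel_tb ρ (i + 1) i i l hRi1 hRi hRi ⟨by omega, h2⟩ ζ
    rw [hhw0 i l hi1 (by omega) h2, hhw0 (i + 1) l (by omega) (by omega) h2,
      Tt_eq_zero (Nn := Nn) (q := q) (s := s) (i + 1) l (Or.inr (Or.inr (by omega))),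
      if_neg (show ¬ (i + 1 = i) by omega), if_neg (show ¬ (i = l) by omega),
      if_pos (show i < l by omega), if_pos (show i < i + 1 by omega)] at h
    simp only [map_zero, LinearMap.zero_apply, map_smul, smul_zero, zero_smul, one_smul,
      one_mul, mul_one, zero_sub, sub_zero, neg_zero, neg_neg, neg_one_smul,
      sub_neg_eq_add, zero_add, add_zero, smul_neg, neg_eq_zero, smul_eq_zero] at h
    rcases h with h' | h'
    · exact absurd h' (sg_ne_zero s (i + 1) i i l)
    · exact h'
  have fH5 : ∀ j l, 1 ≤ j → j < l → l ≤ Nn → j ≠ i → j ≠ i + 1 → l ≠ i → l ≠ i + 1 →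
      ρ (Tb Nn q s j l) (ρ (Tt Nn q s (i + 1) i) ζ) = 0 := by
    intro j l h1 h2 h3 hji hji1 hli hli1
    have hz : (if i < l then (1 : ℂ) else 0) • ρ (Tb Nn q s j i) (ρ (Tt Nn q s (i + 1) l) ζ)
        - (if j < i + 1 then (1 : ℂ) else 0) • ρ (Tt Nn q s j i) (ρ (Tb Nn q s (i + 1) l) ζ)
        = 0 := by
      by_cases hl2 : l < i
      · rw [if_neg (show ¬ (i < l) by omega),
          Tt_eq_zero (Nn := Nn) (q := q) (s := s) j i (Or.inr (Or.inr (by omega))), map_zero]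
        simp
      · have hl3 : i + 2 ≤ l := by omega
        rw [Tt_eq_zero (Nn := Nn) (q := q) (s := s) (i + 1) l (Or.inr (Or.inr (by omega))),
          map_zero]
        by_cases hj2 : j < i + 1
        · rw [Tt_eq_zero (Nn := Nn) (q := q) (s := s) j i (Or.inr (Or.inr (by omega))), map_zero]
          simp
        · rw [if_neg hj2]
          simp
    have h := vrel_tb ρ (i + 1) i j l hRi1 hRi ⟨h1, by omega⟩ ⟨by omega, h3⟩ ζ
    rw [hz, hhw0 j l h1 h2 h3,
      if_neg (show ¬ (i + 1 = j) by omega), if_neg (show ¬ (i = l) by omega)] at h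
    simp only [map_zero, LinearMap.zero_apply, map_smul, smul_zero, zero_smul, one_smul,
      one_mul, mul_one, zero_sub, sub_zero, neg_zero, neg_neg, neg_one_smul,
      sub_neg_eq_add, zero_add, add_zero, smul_neg, neg_eq_zero, smul_eq_zero] at h
    rcases h with h' | h'
    · exact absurd h' (sg_ne_zero s (i + 1) i j l)
    · exact h'
  -- T_{i+1,i+1} on ω
  have fT11 : ρ (Tt Nn q s (i + 1) (i + 1)) (ρ (Tt Nn q s (i + 1) i) ζ)
      = ((qp q s (i + 1))⁻¹ * (lam (i + 1))⁻¹) • ρ (Tt Nn q s (i + 1) i) ζ := by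
    have h := vrel_tt ρ (i + 1) i (i + 1) (i + 1) hRi1 hRi hRi1 hRi1 ζ
    rw [hTζ (i + 1) (by omega) hi2, if_pos rfl, if_neg (show ¬ (i = i + 1) by omega),
      if_pos (show i < i + 1 by omega), if_neg (show ¬ (i + 1 < i + 1) by omega)] at h
    simp only [sg_right_diag, sg_left_diag, map_zero, LinearMap.zero_apply, map_smul,
      smul_zero, zero_smul, one_smul, one_mul, mul_one, zero_sub, sub_zero, neg_zero,
      neg_neg, neg_one_smul, sub_neg_eq_add, zero_add, add_zero, smul_neg] at h
    linear_combination (norm := module) -h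
  -- transported action
  have key : ∀ X : UF Nn q s, (ρ.comp β.symm.toAlgHom) (β X) = ρ X := by
    intro X
    simp [AlgHom.comp_apply]
  have kD1 : (ρ.comp β.symm.toAlgHom) (Tb Nn q s' i i) (ρ (Tt Nn q s (i + 1) i) ζ)
      = (neg1 (s' (i + 1)) * (qp q s (i + 1) * lam (i + 1))) • ρ (Tt Nn q s (i + 1) i) ζ := by
    have h := congrArg (ρ.comp β.symm.toAlgHom) hc10
    rw [key, map_smul] at h
    have h2 := congrArg (fun f : Module.End ℂ V => f (ρ (Tt Nn q s (i + 1) i) ζ)) h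
    simp only [LinearMap.smul_apply] at h2
    rw [hBi1] at h2
    have h3 := smul_cancel (neg1_ne_zero (s' (i + 1))) h2.symm
    rw [h3, neg1_inv, smul_smul]
  have kD2 : (ρ.comp β.symm.toAlgHom) (Tb Nn q s' (i + 1) (i + 1)) (ρ (Tt Nn q s (i + 1) i) ζ)
      = (neg1 (s' i) * ((qp q s i)⁻¹ * lam i)) • ρ (Tt Nn q s (i + 1) i) ζ := by
    have h := congrArg (ρ.comp β.symm.toAlgHom) hc9
    rw [key, map_smul] at h
    have h2 := congrArg (fun f : Module.End ℂ V => f (ρ (Tt Nn q s (i + 1) i) ζ)) h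
    simp only [LinearMap.smul_apply] at h2
    rw [hBii] at h2
    have h3 := smul_cancel (neg1_ne_zero (s' i)) h2.symm
    rw [h3, neg1_inv, smul_smul]
  have kT'ii : (ρ.comp β.symm.toAlgHom) (Tt Nn q s' i i) (ρ (Tt Nn q s (i + 1) i) ζ)
      = (neg1 (s' (i + 1)) * ((qp q s (i + 1))⁻¹ * (lam (i + 1))⁻¹)) • ρ (Tt Nn q s (i + 1) i) ζ := by
    have h := congrArg (ρ.comp β.symm.toAlgHom) hc2
    rw [key, map_smul] at h
    have h2 := congrArg (fun f : Module.End ℂ V => f (ρ (Tt Nn q s (i + 1) i) ζ)) h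
    simp only [LinearMap.smul_apply] at h2
    rw [fT11] at h2
    have h3 := smul_cancel (neg1_ne_zero (s' (i + 1))) h2.symm
    rw [h3, neg1_inv, smul_smul]
  have hdecomp : Tb Nn q s' i (i + 1)
      = (Tb Nn q s' i (i + 1) * (Tt Nn q s' i i * Tt Nn q s' i i))
          * (Tb Nn q s' i i * Tb Nn q s' i i) := by
    have h1 : Tt Nn q s' i i * Tb Nn q s' i i = 1 :=
      Tt_mul_Tb (Nn := Nn) (q := q) (s := s') i hRi
    have h2 : (Tt Nn q s' i i * Tt Nn q s' i i) * (Tb Nn q s' i i * Tb Nn q s' i i) = 1 := by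
      rw [mul_assoc, ← mul_assoc (Tt Nn q s' i i) (Tb Nn q s' i i) (Tb Nn q s' i i), h1,
        one_mul, h1]
    rw [mul_assoc, h2, mul_one]
  have kA : (ρ.comp β.symm.toAlgHom)
      (Tb Nn q s' i (i + 1) * (Tt Nn q s' i i * Tt Nn q s' i i)) (ρ (Tt Nn q s (i + 1) i) ζ)
      = 0 := by
    have h := congrArg (ρ.comp β.symm.toAlgHom) hc3
    rw [key, map_smul] at h
    have h2 := congrArg (fun f : Module.End ℂ V => f (ρ (Tt Nn q s (i + 1) i) ζ)) h
    simp only [LinearMap.smul_apply] at h2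
    rw [hT2] at h2
    refine (smul_eq_zero.mp h2.symm).resolve_left ?_
    exact mul_ne_zero (mul_ne_zero (neg1_ne_zero _) (neg1_ne_zero _)) (inv_ne_zero (hqpe' i))
  have kPii1 : (ρ.comp β.symm.toAlgHom) (Tb Nn q s' i (i + 1)) (ρ (Tt Nn q s (i + 1) i) ζ) = 0 := by
    have e : (ρ.comp β.symm.toAlgHom) (Tb Nn q s' i (i + 1)) (ρ (Tt Nn q s (i + 1) i) ζ)
        = (ρ.comp β.symm.toAlgHom) (Tb Nn q s' i (i + 1) * (Tt Nn q s' i i * Tt Nn q s' i i))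
            ((ρ.comp β.symm.toAlgHom) (Tb Nn q s' i i)
              ((ρ.comp β.symm.toAlgHom) (Tb Nn q s' i i) (ρ (Tt Nn q s (i + 1) i) ζ))) := by
      conv_lhs => rw [hdecomp]
      rw [map_mul (ρ.comp β.symm.toAlgHom)
          (Tb Nn q s' i (i + 1) * (Tt Nn q s' i i * Tt Nn q s' i i))
          (Tb Nn q s' i i * Tb Nn q s' i i),
        map_mul (ρ.comp β.symm.toAlgHom) (Tb Nn q s' i i) (Tb Nn q s' i i)]
      simp only [Module.End.mul_apply]
    rw [e, kD1]
    simp only [map_smul, kD1, kA, smul_zero]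
  have kPki : ∀ k, 1 ≤ k → k < i →
      (ρ.comp β.symm.toAlgHom) (Tb Nn q s' k i) (ρ (Tt Nn q s (i + 1) i) ζ) = 0 := by
    intro k h1 h2
    have h := congrArg (ρ.comp β.symm.toAlgHom) (hc13 k h2)
    rw [key, map_smul] at h
    have h3 := congrArg (fun f : Module.End ℂ V => f (ρ (Tt Nn q s (i + 1) i) ζ)) h
    simp only [LinearMap.smul_apply] at h3
    rw [fH1 k h1 h2] at h3
    refine (smul_eq_zero.mp h3.symm).resolve_left ?_
    exact neg_ne_zero.mpr (sg_ne_zero s' (i - 1) i i (i + 1))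
  have kPki1 : ∀ k, 1 ≤ k → k < i →
      (ρ.comp β.symm.toAlgHom) (Tb Nn q s' k (i + 1)) (ρ (Tt Nn q s (i + 1) i) ζ) = 0 := by
    intro k h1 h2
    have h := congrArg (ρ.comp β.symm.toAlgHom) (hc12 k h2)
    rw [key, map_sub, map_smul, map_smul,
      map_mul (ρ.comp β.symm.toAlgHom) (Tb Nn q s' k i * Tb Nn q s' i (i + 1)) (Tt Nn q s' i i),
      map_mul (ρ.comp β.symm.toAlgHom) (Tb Nn q s' k i) (Tb Nn q s' i (i + 1))] at h
    have h3 := congrArg (fun f : Module.End ℂ V => f (ρ (Tt Nn q s (i + 1) i) ζ)) h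
    simp only [LinearMap.sub_apply, LinearMap.smul_apply, Module.End.mul_apply] at h3
    rw [fH2 k h1 h2, kT'ii] at h3
    simp only [map_smul, kPii1, smul_zero, map_zero, sub_zero] at h3
    exact (smul_eq_zero.mp h3.symm).resolve_left
      (mul_ne_zero (mul_ne_zero (sg_ne_zero s' (i - 1) i i (i + 1)) (neg1_ne_zero (s' i)))
        (hqpe' i))
  have kPil : ∀ l, i + 2 ≤ l → l ≤ Nn →
      (ρ.comp β.symm.toAlgHom) (Tb Nn q s' i l) (ρ (Tt Nn q s (i + 1) i) ζ) = 0 := by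
    intro l h1 h2
    have h := congrArg (ρ.comp β.symm.toAlgHom) (hc15 l h1)
    rw [key, map_smul] at h
    have h3 := congrArg (fun f : Module.End ℂ V => f (ρ (Tt Nn q s (i + 1) i) ζ)) h
    simp only [LinearMap.smul_apply] at h3
    rw [fH3 l h1 h2] at h3
    refine (smul_eq_zero.mp h3.symm).resolve_left ?_
    exact neg_ne_zero.mpr (sg_ne_zero s' i (i + 1) (i + 1) (i + 2))
  have kPi1l : ∀ l, i + 2 ≤ l → l ≤ Nn →
      (ρ.comp β.symm.toAlgHom) (Tb Nn q s' (i + 1) l) (ρ (Tt Nn q s (i + 1) i) ζ) = 0 := by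
    intro l h1 h2
    have h := congrArg (ρ.comp β.symm.toAlgHom) (hc14 l h1)
    rw [key, map_sub, map_smul, map_smul,
      map_mul (ρ.comp β.symm.toAlgHom) (Tt Nn q s' (i + 1) i * Tb Nn q s' i l) (Tb Nn q s' i i),
      map_mul (ρ.comp β.symm.toAlgHom) (Tt Nn q s' (i + 1) i) (Tb Nn q s' i l)] at h
    have h3 := congrArg (fun f : Module.End ℂ V => f (ρ (Tt Nn q s (i + 1) i) ζ)) h
    simp only [LinearMap.sub_apply, LinearMap.smul_apply, Module.End.mul_apply] at h3
    rw [fH4 l h1 h2, kD1] at h3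
    simp only [map_smul, kPil l h1 h2, smul_zero, map_zero, sub_zero] at h3
    exact (smul_eq_zero.mp h3.symm).resolve_left
      (mul_ne_zero (mul_ne_zero (sg_ne_zero s' i (i + 1) i (i + 2)) (neg1_ne_zero (s' i)))
        (inv_ne_zero (hqpe' i)))
  have kPgen : ∀ j l, ¬ (j = i ∧ l = i) → ¬ (j = i + 1 ∧ l = i + 1) → ¬ (j = i ∧ l = i + 1) →
      ¬ (l = i ∧ j < i) → ¬ (l = i + 1 ∧ j < i) → ¬ (j = i ∧ i + 2 ≤ l) →
      ¬ (j = i + 1 ∧ i + 2 ≤ l) →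
      (ρ.comp β.symm.toAlgHom) (Tb Nn q s' j l) (ρ (Tt Nn q s (i + 1) i) ζ)
        = ρ (Tb Nn q s j l) (ρ (Tt Nn q s (i + 1) i) ζ) := by
    intro j l e1 e2 e3 e4 e5 e6 e7
    have h := congrArg (ρ.comp β.symm.toAlgHom) (hc16 j l e1 e2 e3 e4 e5 e6 e7)
    rw [key] at h
    rw [← h]
  -- assemble
  refine ⟨hωne, ?_, ?_, ?_, ?_⟩
  · -- highest-weight vanishing for the transported module
    intro j k h1 h2 h3
    by_cases hji : j = i
    · by_cases hk : k = i + 1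
      · rw [hji, hk]; exact kPii1
      · rw [hji]; exact kPil k (by omega) h3
    · by_cases hji1 : j = i + 1
      · rw [hji1]; exact kPi1l k (by omega) h3
      · by_cases hki : k = i
        · rw [hki]; exact kPki j h1 (by omega)
        · by_cases hki1 : k = i + 1
          · rw [hki1]; exact kPki1 j h1 (by omega)
          · rw [kPgen j k (by omega) (by omega) (by omega) (by omega) (by omega) (by omega)
              (by omega)]
            exact fH5 j k h1 h2 h3 hji hji1 hki hki1
  · -- eigenvalues up to sign twist
    refine ⟨fun j => if j = i then neg1 (s' (i + 1)) else if j = i + 1 then neg1 (s' i) else 1,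
      ?_, ?_⟩
    · intro j
      by_cases hji : j = i
      · simp only [if_pos hji]
        exact neg1_cases _
      · by_cases hji1 : j = i + 1
        · simp only [if_neg hji, if_pos hji1]
          exact neg1_cases _
        · simp only [if_neg hji, if_neg hji1]
          exact Or.inl trivial
    · intro j h1 h2
      by_cases hji : j = i
      · rw [hji]
        simp only [if_pos rfl]
        exact kD1
      · by_cases hji1 : j = i + 1
        · rw [hji1]
          simp only [if_neg (show ¬ i + 1 = i by omega), if_pos rfl]
          exact kD2
        · simp only [if_neg hji, if_neg hji1, one_mul]
          rw [kPgen j j (by omega) (by omega) (by omega) (by omega) (by omega) (by omega)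
            (by omega)]
          exact hBjj j h1 h2 hji hji1
  · -- cyclicity of ω
    intro v
    let W : Submodule ℂ V :=
      { carrier := Set.range fun x : UF Nn q s => ρ x (ρ (Tt Nn q s (i + 1) i) ζ)
        add_mem' := by
          rintro a b ⟨x, rfl⟩ ⟨y, rfl⟩
          exact ⟨x + y, by simp [map_add]⟩
        zero_mem' := ⟨0, by simp⟩
        smul_mem' := by
          rintro c a ⟨x, rfl⟩
          exact ⟨c • x, by simp⟩ }
    have hWinv : ∀ (x : UF Nn q s) (w : V), w ∈ W → ρ x w ∈ W := by
      rintro x w ⟨y, rfl⟩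
      exact ⟨x * y, by simp [map_mul]⟩
    rcases hirr W hWinv with hbot | htop
    · exfalso
      apply hωne
      have hmem : ρ (Tt Nn q s (i + 1) i) ζ ∈ W := ⟨1, by simp⟩
      rw [hbot] at hmem
      simpa using hmem
    · have hv : v ∈ W := by rw [htop]; trivial
      obtain ⟨x, hx⟩ := hv
      refine ⟨β x, ?_⟩
      show (ρ.comp β.symm.toAlgHom) (β x) (ρ (Tt Nn q s (i + 1) i) ζ) = v
      rw [key]
      exact hx
  · -- irreducibility of the transported module
    intro W hW
    apply hirr W
    intro x w hw
    have h := hW (β x) w hw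
    rwa [key] at h

end

end Stmt9
end

section
/- Transition rule through an odd reflection, atypical case: let 1 ≤ i ≤ N−1 with s_i ≠ s_{i+1}, and let V be an irreducible (simple) highest weight U_q(gl_{m|n,s})-module with highest weight Λ = (λ_1, …, λ_N) and maximal vector ζ. Assume λ_i = λ_{i+1} (in the paper's normalization λ_j = q_j^{Λ_j}, this is the condition Λ_i + Λ_{i+1} = 0). Then the transported module V^β over U_q(gl_{m|n,s′}) is an irreducible highest weight module with the same maximal vector ζ, whose highest weight equals, up to a sign twist, Λ^{[i]} := (λ_1, …, λ_{i−1}, λ_{i+1}, λ_i, λ_{i+2}, …, λ_N). -/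
/-!
Reading the clauses of `β` backwards expresses the action on `ζ` of every raising or diagonal
generator of `U_q(gl_{m|n,s'})` through the highest weight data of `ζ`, with one exception:
`β(t_{i+1,i})` is `t̄_{i,i+1}` times an invertible diagonal element. So everything hinges on
`v := t_{i+1,i} ζ = 0`.

When `λ_i = λ_{i+1}`, the vector `v` is annihilated by every raising generator `t̄_{kl}`, `k < l`.
Commuting a raising generator to the right through a monomial in the `t_{ab}` and `t̄_{aa}` then
shows that the span of `x v`, `x` in the lower Borel part, is a submodule. It consists of weight
vectors whose weights have positive height, so (as `q` is not a root of unity) it cannot contain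
the weight-zero vector `ζ`; by irreducibility it is zero.
-/

namespace Stmt10

noncomputable section

/-- `(-1)^x` for `x : ZMod 2`. -/
def neg1 (x : ZMod 2) : ℂ := if x = 0 then 1 else -1

/-- `q_i = q^{d_i}` where `d_i = (-1)^{s_i}`. -/
def qp (q : ℂ) (s : ℕ → ZMod 2) (i : ℕ) : ℂ := if s i = 0 then q else q⁻¹

/-- The sign `ς_{ab;cd} = (−1)^{(|a|+|b|)(|c|+|d|)}`. -/
def sg (s : ℕ → ZMod 2) (a b c d : ℕ) : ℂ := neg1 ((s a + s b) * (s c + s d))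

/-- `i` lies in the index range `{1, …, Nn}`. -/
def inR (Nn i : ℕ) : Prop := 1 ≤ i ∧ i ≤ Nn

/-- Generators of the RTT quantum general linear superalgebra. -/
inductive FGen : Type
  | t : ℕ → ℕ → FGen
  | tb : ℕ → ℕ → FGen

/-- The free algebra on the RTT generators. -/
abbrev FA : Type := FreeAlgebra ℂ FGen

/-- The generator `t_{ij}` in the free algebra. -/
def ft (i j : ℕ) : FA := FreeAlgebra.ι ℂ (FGen.t i j)

/-- The generator `t̄_{ij}` in the free algebra. -/
def fb (i j : ℕ) : FA := FreeAlgebra.ι ℂ (FGen.tb i j)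

/-- Defining relations of the RTT quantum general linear superalgebra `U_q(gl_{m|n,s})`. -/
inductive FRel (Nn : ℕ) (q : ℂ) (s : ℕ → ZMod 2) : FA → FA → Prop
  | zt : ∀ i j : ℕ, (¬ inR Nn i ∨ ¬ inR Nn j ∨ i < j) → FRel Nn q s (ft i j) 0
  | zb : ∀ i j : ℕ, (¬ inR Nn i ∨ ¬ inR Nn j ∨ j < i) → FRel Nn q s (fb i j) 0
  | unit_tb : ∀ i : ℕ, inR Nn i → FRel Nn q s (ft i i * fb i i) 1
  | unit_bt : ∀ i : ℕ, inR Nn i → FRel Nn q s (fb i i * ft i i) 1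
  | rtt_tt : ∀ i j k l : ℕ, inR Nn i → inR Nn j → inR Nn k → inR Nn l →
      FRel Nn q s
        ((if i = k then qp q s i else 1) • (ft i j * ft k l)
          - (sg s i j k l * (if j = l then qp q s j else 1)) • (ft k l * ft i j))
        ((sg s i k k l * (qp q s k - (qp q s k)⁻¹)
            * ((if j < l then (1 : ℂ) else 0) - (if k < i then (1 : ℂ) else 0))) • (ft k j * ft i l))
  | rtt_bb : ∀ i j k l : ℕ, inR Nn i → inR Nn j → inR Nn k → inR Nn l →
      FRel Nn q s
        ((if i = k then qp q s i else 1) • (fb i j * fb k l)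
          - (sg s i j k l * (if j = l then qp q s j else 1)) • (fb k l * fb i j))
        ((sg s i k k l * (qp q s k - (qp q s k)⁻¹)
            * ((if j < l then (1 : ℂ) else 0) - (if k < i then (1 : ℂ) else 0))) • (fb k j * fb i l))
  | rtt_tb : ∀ i j k l : ℕ, inR Nn i → inR Nn j → inR Nn k → inR Nn l →
      FRel Nn q s
        ((if i = k then qp q s i else 1) • (ft i j * fb k l)
          - (sg s i j k l * (if j = l then qp q s j else 1)) • (fb k l * ft i j))
        ((sg s i k k l * (qp q s k - (qp q s k)⁻¹)) •
          ((if j < l then (1 : ℂ) else 0) • (fb k j * ft i l)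
            - (if k < i then (1 : ℂ) else 0) • (ft k j * fb i l)))

/-- The RTT quantum general linear superalgebra `U_q(gl_{m|n,s})`. -/
abbrev UF (Nn : ℕ) (q : ℂ) (s : ℕ → ZMod 2) : Type := RingQuot (FRel Nn q s)

/-- The generator `t_{ij}` of `U_q(gl_{m|n,s})` (zero for `i < j` or out-of-range indices). -/
def Tt (Nn : ℕ) (q : ℂ) (s : ℕ → ZMod 2) (i j : ℕ) : UF Nn q s :=
  RingQuot.mkAlgHom ℂ (FRel Nn q s) (ft i j)

/-- The generator `t̄_{ij}` of `U_q(gl_{m|n,s})` (zero for `j < i` or out-of-range indices). -/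
def Tb (Nn : ℕ) (q : ℂ) (s : ℕ → ZMod 2) (i j : ℕ) : UF Nn q s :=
  RingQuot.mkAlgHom ℂ (FRel Nn q s) (fb i j)

/-- The defining clauses of the odd-reflection isomorphism
`β_{i,s} : U_q(gl_{m|n,s}) → U_q(gl_{m|n,s′})` on the RTT generators
(here `s′ = σ_i(s)`). -/
def OddReflClauses (Nn : ℕ) (q : ℂ) (s s' : ℕ → ZMod 2) (i : ℕ)
    (f : UF Nn q s ≃ₐ[ℂ] UF Nn q s') : Prop :=
  f (Tt Nn q s i i) = neg1 (s' i) • Tt Nn q s' (i + 1) (i + 1) ∧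
  f (Tt Nn q s (i + 1) (i + 1)) = neg1 (s' (i + 1)) • Tt Nn q s' i i ∧
  f (Tt Nn q s (i + 1) i)
    = (neg1 (s' i) * neg1 (s' (i + 1)) * (qp q s' i)⁻¹) •
        (Tb Nn q s' i (i + 1) * (Tt Nn q s' i i * Tt Nn q s' i i)) ∧
  (∀ k : ℕ, k < i →
    f (Tt Nn q s i k)
      = (sg s' (i - 1) i i (i + 1) * (qp q s' i)⁻¹) • Tt Nn q s' (i + 1) k
        - (sg s' k (i - 1) i (i + 1)) •
            (Tb Nn q s' i i * Tt Nn q s' (i + 1) i * Tt Nn q s' i k)) ∧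
  (∀ k : ℕ, k < i →
    f (Tt Nn q s (i + 1) k)
      = (-(sg s' (i - 1) i i (i + 1) * neg1 (s' (i + 1)))) • Tt Nn q s' i k) ∧
  (∀ l : ℕ, i + 2 ≤ l →
    f (Tt Nn q s l i)
      = (sg s' i (i + 1) i (i + 2) * qp q s' i) • Tt Nn q s' l (i + 1)
        - (sg s' i (i + 1) (i + 2) l) •
            (Tt Nn q s' i i * Tt Nn q s' l i * Tb Nn q s' i (i + 1))) ∧
  (∀ l : ℕ, i + 2 ≤ l →
    f (Tt Nn q s l (i + 1))
      = (-(sg s' i (i + 1) (i + 1) (i + 2) * neg1 (s' (i + 1)))) • Tt Nn q s' l i) ∧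
  (∀ l k : ℕ, ¬ (l = i ∧ k = i) → ¬ (l = i + 1 ∧ k = i + 1) → ¬ (l = i + 1 ∧ k = i) →
    ¬ (l = i ∧ k < i) → ¬ (l = i + 1 ∧ k < i) →
    ¬ (k = i ∧ i + 2 ≤ l) → ¬ (k = i + 1 ∧ i + 2 ≤ l) →
    f (Tt Nn q s l k) = Tt Nn q s' l k) ∧
  f (Tb Nn q s i i) = neg1 (s' i) • Tb Nn q s' (i + 1) (i + 1) ∧
  f (Tb Nn q s (i + 1) (i + 1)) = neg1 (s' (i + 1)) • Tb Nn q s' i i ∧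
  f (Tb Nn q s i (i + 1))
    = (qp q s' i) • (Tb Nn q s' i i * Tb Nn q s' i i * Tt Nn q s' (i + 1) i) ∧
  (∀ k : ℕ, k < i →
    f (Tb Nn q s k i)
      = (sg s' (i - 1) i i (i + 1) * neg1 (s' i) * qp q s' i) • Tb Nn q s' k (i + 1)
        - (sg s' k (i - 1) i (i + 1) * neg1 (s' i)) •
            (Tb Nn q s' k i * Tb Nn q s' i (i + 1) * Tt Nn q s' i i)) ∧
  (∀ k : ℕ, k < i →
    f (Tb Nn q s k (i + 1)) = (-(sg s' (i - 1) i i (i + 1))) • Tb Nn q s' k i) ∧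
  (∀ l : ℕ, i + 2 ≤ l →
    f (Tb Nn q s i l)
      = (sg s' i (i + 1) i (i + 2) * neg1 (s' i) * (qp q s' i)⁻¹) • Tb Nn q s' (i + 1) l
        - (sg s' i (i + 1) (i + 2) l * neg1 (s' i)) •
            (Tt Nn q s' (i + 1) i * Tb Nn q s' i l * Tb Nn q s' i i)) ∧
  (∀ l : ℕ, i + 2 ≤ l →
    f (Tb Nn q s (i + 1) l) = (-(sg s' i (i + 1) (i + 1) (i + 2))) • Tb Nn q s' i l) ∧
  (∀ k l : ℕ, ¬ (k = i ∧ l = i) → ¬ (k = i + 1 ∧ l = i + 1) → ¬ (k = i ∧ l = i + 1) →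
    ¬ (l = i ∧ k < i) → ¬ (l = i + 1 ∧ k < i) →
    ¬ (k = i ∧ i + 2 ≤ l) → ¬ (k = i + 1 ∧ i + 2 ≤ l) →
    f (Tb Nn q s k l) = Tb Nn q s' k l)

lemma neg1_ne_zero (x : ZMod 2) : neg1 x ≠ 0 := by
  unfold neg1; split <;> norm_num

lemma neg1_eq_one_or_eq_neg_one (x : ZMod 2) : neg1 x = 1 ∨ neg1 x = -1 := by
  unfold neg1; split <;> simp

lemma neg1_inv (x : ZMod 2) : (neg1 x)⁻¹ = neg1 x := by
  unfold neg1; split <;> norm_num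

lemma sg_ne_zero (s : ℕ → ZMod 2) (a b c d : ℕ) : sg s a b c d ≠ 0 :=
  neg1_ne_zero _

lemma sg_self_right (s : ℕ → ZMod 2) (a b j : ℕ) : sg s a b j j = 1 := by
  have h : s j + s j = 0 := by generalize s j = x; revert x; decide
  simp [sg, neg1, h]

lemma qp_ne_zero {q : ℂ} (hq0 : q ≠ 0) (s : ℕ → ZMod 2) (j : ℕ) : qp q s j ≠ 0 := by
  unfold qp; split
  · exact hq0
  · exact inv_ne_zero hq0

lemma zpow_ne_one_of_forall_pow_ne_one {q : ℂ} (hqru : ∀ k : ℕ, k ≠ 0 → q ^ k ≠ 1)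
    {k : ℤ} (hk : k ≠ 0) : q ^ k ≠ 1 := by
  rcases Int.natAbs_eq k with h | h <;> rw [h]
  · rw [zpow_natCast]; exact hqru _ (by omega)
  · rw [zpow_neg, zpow_natCast, ne_eq, inv_eq_one]; exact hqru _ (by omega)

lemma qp_zpow_ne_one {q : ℂ} (hqru : ∀ k : ℕ, k ≠ 0 → q ^ k ≠ 1) (s : ℕ → ZMod 2)
    (j : ℕ) {k : ℤ} (hk : k ≠ 0) : qp q s j ^ k ≠ 1 := by
  unfold qp; split
  · exact zpow_ne_one_of_forall_pow_ne_one hqru hk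
  · rw [← zpow_neg_one, ← zpow_mul]
    exact zpow_ne_one_of_forall_pow_ne_one hqru (by omega)

lemma eq_div_smul_of_smul_sub_smul_eq_zero {M : Type*} [AddCommGroup M] [Module ℂ M]
    {c₁ c₂ : ℂ} {X Y : M} (hc₂ : c₂ ≠ 0) (h : c₁ • X - c₂ • Y = 0) : Y = (c₁ / c₂) • X := by
  rw [sub_eq_zero] at h
  rw [div_eq_inv_mul, mul_smul, h, inv_smul_smul₀ hc₂]

theorem not_mem_span_of_forall_eigenvector {ι K V : Type*} [Field K] [AddCommGroup V]
    [Module K V] (f : ι → Module.End K V) (hf : ∀ i j, Commute (f i) (f j)) {χ₀ : ι → K}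
    {w : V} (hw0 : w ≠ 0) (hw : ∀ i, f i w = χ₀ i • w) {S : Set V}
    (hS : ∀ x ∈ S, ∃ χ ≠ χ₀, ∀ i, f i x = χ i • x) : w ∉ Submodule.span K S := by
  set E : (ι → K) → Submodule K V := fun χ => ⨅ i, (f i).maxGenEigenspace (χ i)
  have hind : iSupIndep E := Module.End.independent_iInf_maxGenEigenspace_of_forall_mapsTo f
    fun i j φ => Module.End.mapsTo_maxGenEigenspace_of_comm (hf j i) φ
  have hE : ∀ χ x, (∀ i, f i x = χ i • x) → x ∈ E χ := fun χ x hx =>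
    Submodule.mem_iInf _ |>.mpr fun i =>
      Module.End.eigenspace_le_maxGenEigenspace (Module.End.mem_eigenspace_iff.mpr (hx i))
  have hle : Submodule.span K S ≤ ⨆ χ ≠ χ₀, E χ := Submodule.span_le.mpr fun x hx => by
    obtain ⟨χ, hne, hχ⟩ := hS x hx
    exact le_iSup₂ (f := fun χ (_ : χ ≠ χ₀) => E χ) χ hne (hE χ x hχ)
  exact fun hmem => hw0 (Submodule.disjoint_def.mp (hind χ₀) w (hE χ₀ w hw) (hle hmem))

section OrbitSpan

variable {A V : Type*} [Ring A] [Algebra ℂ A] [AddCommGroup V] [Module ℂ V]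
variable (ρ : A →ₐ[ℂ] Module.End ℂ V) (M : Submonoid A) (v : V)

def orbitSpan : Submodule ℂ V := Submodule.span ℂ ((fun m => ρ m v) '' M)

variable {ρ M v}

lemma apply_mem_orbitSpan {m : A} (hm : m ∈ M) : ρ m v ∈ orbitSpan ρ M v :=
  Submodule.subset_span ⟨m, hm, rfl⟩

lemma apply_mem_orbitSpan_of_forall {x : A} (hx : ∀ m ∈ M, ρ x (ρ m v) ∈ orbitSpan ρ M v)
    {w : V} (hw : w ∈ orbitSpan ρ M v) : ρ x w ∈ orbitSpan ρ M v := by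
  induction hw using Submodule.span_induction with
  | mem w hw =>
    obtain ⟨m, hm, rfl⟩ := hw
    exact hx m hm
  | zero => simp
  | add w w' _ _ h h' => simpa using add_mem h h'
  | smul c w _ h => simpa using Submodule.smul_mem _ c h

lemma apply_mem_orbitSpan_of_mem {g : A} (hg : g ∈ M) {w : V} (hw : w ∈ orbitSpan ρ M v) :
    ρ g w ∈ orbitSpan ρ M v :=
  apply_mem_orbitSpan_of_forall (fun m hm => by
    simpa using apply_mem_orbitSpan (v := v) (M.mul_mem hg hm)) hw

end OrbitSpan

section Transport

variable {A B V : Type*} [Ring A] [Ring B] [Algebra ℂ A] [Algebra ℂ B] [AddCommGroup V]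
  [Module ℂ V] (β : A ≃ₐ[ℂ] B) (ρ : A →ₐ[ℂ] Module.End ℂ V)

lemma comp_symm_apply_apply (x : A) : (ρ.comp β.symm.toAlgHom) (β x) = ρ x := by
  simp

lemma comp_symm_eq_inv_smul {x : A} {y : B} {c : ℂ} (hc : c ≠ 0) (h : β x = c • y) :
    (ρ.comp β.symm.toAlgHom) y = c⁻¹ • ρ x := by
  rw [← inv_smul_smul₀ hc y, ← h, map_smul, comp_symm_apply_apply]

lemma surjective_comp_symm_apply {ζ : V} (hgen : Function.Surjective fun x => ρ x ζ) :
    Function.Surjective fun y => (ρ.comp β.symm.toAlgHom) y ζ := fun w => by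
  obtain ⟨x, hx⟩ := hgen w
  exact ⟨β x, by simpa using hx⟩

lemma irreducible_comp_symm
    (hirr : ∀ W : Submodule ℂ V, (∀ (x : A) (w : V), w ∈ W → ρ x w ∈ W) → W = ⊥ ∨ W = ⊤)
    (W : Submodule ℂ V) (hW : ∀ (y : B) (w : V), w ∈ W → (ρ.comp β.symm.toAlgHom) y w ∈ W) :
    W = ⊥ ∨ W = ⊤ :=
  hirr W fun x w hw => by simpa using hW (β x) w hw

end Transport

section Relations

variable {Nn : ℕ} {q : ℂ} {s : ℕ → ZMod 2}

lemma Tt_eq_zero {a b : ℕ} (h : ¬ inR Nn a ∨ ¬ inR Nn b ∨ a < b) : Tt Nn q s a b = 0 :=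
  (RingQuot.mkAlgHom_rel ℂ (FRel.zt (q := q) (s := s) a b h)).trans (map_zero _)

lemma Tb_eq_zero {a b : ℕ} (h : ¬ inR Nn a ∨ ¬ inR Nn b ∨ b < a) : Tb Nn q s a b = 0 :=
  (RingQuot.mkAlgHom_rel ℂ (FRel.zb (q := q) (s := s) a b h)).trans (map_zero _)

lemma Tt_mul_Tb_self {j : ℕ} (hj : inR Nn j) : Tt Nn q s j j * Tb Nn q s j j = 1 :=
  (map_mul _ _ _).symm.trans
    ((RingQuot.mkAlgHom_rel ℂ (FRel.unit_tb (q := q) (s := s) j hj)).trans (map_one _))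

lemma rtt_tb {a b c d : ℕ} (ha : inR Nn a) (hb : inR Nn b) (hc : inR Nn c) (hd : inR Nn d) :
    (if a = c then qp q s a else 1) • (Tt Nn q s a b * Tb Nn q s c d)
      - (sg s a b c d * (if b = d then qp q s b else 1)) • (Tb Nn q s c d * Tt Nn q s a b)
    = (sg s a c c d * (qp q s c - (qp q s c)⁻¹)) •
        ((if b < d then (1 : ℂ) else 0) • (Tb Nn q s c b * Tt Nn q s a d)
          - (if c < a then (1 : ℂ) else 0) • (Tt Nn q s c b * Tb Nn q s a d)) := by
  have h := RingQuot.mkAlgHom_rel ℂ (FRel.rtt_tb (q := q) (s := s) a b c d ha hb hc hd)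
  simp only [map_sub, map_smul, map_mul] at h
  exact h

lemma rtt_bb {a b c d : ℕ} (ha : inR Nn a) (hb : inR Nn b) (hc : inR Nn c) (hd : inR Nn d) :
    (if a = c then qp q s a else 1) • (Tb Nn q s a b * Tb Nn q s c d)
      - (sg s a b c d * (if b = d then qp q s b else 1)) • (Tb Nn q s c d * Tb Nn q s a b)
    = (sg s a c c d * (qp q s c - (qp q s c)⁻¹)
        * ((if b < d then (1 : ℂ) else 0) - (if c < a then (1 : ℂ) else 0))) •
        (Tb Nn q s c b * Tb Nn q s a d) := by
  have h := RingQuot.mkAlgHom_rel ℂ (FRel.rtt_bb (q := q) (s := s) a b c d ha hb hc hd)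
  simp only [map_sub, map_smul, map_mul] at h
  exact h

end Relations

def rootWeight (a b : ℕ) : ℕ → ℤ := Pi.single a 1 - Pi.single b 1

def height (Nn : ℕ) (ν : ℕ → ℤ) : ℤ := ∑ j ∈ Finset.Icc 1 Nn, (j : ℤ) * ν j

lemma height_add (Nn : ℕ) (ν μ : ℕ → ℤ) : height Nn (ν + μ) = height Nn ν + height Nn μ := by
  simp only [height, Pi.add_apply, mul_add, Finset.sum_add_distrib]

lemma height_rootWeight {Nn a b : ℕ} (ha : inR Nn a) (hb : inR Nn b) :
    height Nn (rootWeight a b) = a - b := by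
  have ha' : a ∈ Finset.Icc 1 Nn := Finset.mem_Icc.mpr ha
  have hb' : b ∈ Finset.Icc 1 Nn := Finset.mem_Icc.mpr hb
  simp [height, rootWeight, Pi.single_apply, mul_sub, Finset.sum_sub_distrib, ha', hb']

lemma exists_ne_zero_of_height_ne_zero {Nn : ℕ} {ν : ℕ → ℤ} (h : height Nn ν ≠ 0) :
    ∃ j, inR Nn j ∧ ν j ≠ 0 := by
  obtain ⟨j, hj, hν⟩ := Finset.exists_ne_zero_of_sum_ne_zero h
  exact ⟨j, Finset.mem_Icc.mp hj, right_ne_zero_of_mul hν⟩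

section Homogeneous

variable {Nn : ℕ} {q : ℂ} {s : ℕ → ZMod 2}

lemma qp_zpow_rootWeight (s : ℕ → ZMod 2) (hq0 : q ≠ 0) (a b j : ℕ) :
    qp q s j ^ rootWeight a b j
      = (if a = j then qp q s a else 1) / (if b = j then qp q s b else 1) := by
  have := qp_ne_zero hq0 s j
  simp only [rootWeight, Pi.sub_apply, Pi.single_apply]
  split_ifs <;> subst_vars <;> simp_all [zpow_neg]

lemma Tb_self_mul_Tt (hq0 : q ≠ 0) {j : ℕ} (hj : inR Nn j) (a b : ℕ) :
    Tb Nn q s j j * Tt Nn q s a b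
      = qp q s j ^ rootWeight a b j • (Tt Nn q s a b * Tb Nn q s j j) := by
  by_cases hab : inR Nn a ∧ inR Nn b
  · have H := rtt_tb (q := q) (s := s) hab.1 hab.2 hj hj
    rw [sg_self_right, one_mul] at H
    have hR : (if b < j then (1 : ℂ) else 0) • (Tb Nn q s j b * Tt Nn q s a j)
        - (if j < a then (1 : ℂ) else 0) • (Tt Nn q s j b * Tb Nn q s a j) = 0 := by
      split_ifs <;> simp [Tb_eq_zero, *]
    rw [hR, smul_zero] at H
    rw [qp_zpow_rootWeight s hq0]
    exact eq_div_smul_of_smul_sub_smul_eq_zero (by split_ifs <;> simp [qp_ne_zero hq0]) H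
  · rw [Tt_eq_zero (a := a) (b := b) (by tauto)]
    simp

lemma Tb_self_mul_Tb (hq0 : q ≠ 0) {j : ℕ} (hj : inR Nn j) (a b : ℕ) :
    Tb Nn q s j j * Tb Nn q s a b
      = qp q s j ^ rootWeight a b j • (Tb Nn q s a b * Tb Nn q s j j) := by
  by_cases hab : inR Nn a ∧ inR Nn b
  · have H := rtt_bb (q := q) (s := s) hab.1 hab.2 hj hj
    rw [sg_self_right, one_mul] at H
    have hR : ((if b < j then (1 : ℂ) else 0) - (if j < a then (1 : ℂ) else 0)) •
        (Tb Nn q s j b * Tb Nn q s a j) = 0 := by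
      split_ifs <;> simp [Tb_eq_zero, *]
    rw [mul_smul, hR, smul_zero] at H
    rw [qp_zpow_rootWeight s hq0]
    exact eq_div_smul_of_smul_sub_smul_eq_zero (by split_ifs <;> simp [qp_ne_zero hq0]) H
  · rw [Tb_eq_zero (a := a) (b := b) (by tauto)]
    simp

def IsHomogeneous (x : UF Nn q s) (ν : ℕ → ℤ) : Prop :=
  ∀ j, inR Nn j → Tb Nn q s j j * x = qp q s j ^ ν j • (x * Tb Nn q s j j)

lemma IsHomogeneous.mul (hq0 : q ≠ 0) {x y : UF Nn q s} {ν μ : ℕ → ℤ}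
    (hx : IsHomogeneous x ν) (hy : IsHomogeneous y μ) : IsHomogeneous (x * y) (ν + μ) := by
  intro j hj
  rw [← mul_assoc, hx j hj, smul_mul_assoc, mul_assoc, hy j hj, mul_smul_comm, smul_smul,
    Pi.add_apply, zpow_add₀ (qp_ne_zero hq0 s j), mul_assoc]

def lowerGenerators (Nn : ℕ) (q : ℂ) (s : ℕ → ZMod 2) : Set (UF Nn q s) :=
  {x | (∃ a b, Tt Nn q s a b = x) ∨ ∃ a, Tb Nn q s a a = x}

def lowerBorel (Nn : ℕ) (q : ℂ) (s : ℕ → ZMod 2) : Submonoid (UF Nn q s) :=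
  Submonoid.closure (lowerGenerators Nn q s)

lemma Tt_mem_lowerBorel (a b : ℕ) : Tt Nn q s a b ∈ lowerBorel Nn q s :=
  Submonoid.subset_closure (Or.inl ⟨a, b, rfl⟩)

lemma Tb_mem_lowerBorel {k l : ℕ} (h : l ≤ k) : Tb Nn q s k l ∈ lowerBorel Nn q s := by
  rcases h.lt_or_eq with h | rfl
  · rw [Tb_eq_zero (Or.inr (Or.inr h)), ← Tt_eq_zero (Nn := Nn) (q := q) (s := s) (a := 0)
      (b := 0) (Or.inl (by simp [inR]))]
    exact Tt_mem_lowerBorel 0 0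
  · exact Submonoid.subset_closure (Or.inr ⟨l, rfl⟩)

lemma exists_isHomogeneous_of_mem_lowerBorel (hq0 : q ≠ 0) {x : UF Nn q s}
    (hx : x ∈ lowerBorel Nn q s) : ∃ ν, 0 ≤ height Nn ν ∧ IsHomogeneous x ν := by
  induction hx using Submonoid.closure_induction with
  | mem x hx =>
    rcases hx with ⟨a, b, rfl⟩ | ⟨a, rfl⟩
    · by_cases h : inR Nn a ∧ inR Nn b ∧ b ≤ a
      · refine ⟨rootWeight a b, ?_, fun j hj => Tb_self_mul_Tt hq0 hj a b⟩
        rw [height_rootWeight h.1 h.2.1]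
        omega
      · refine ⟨0, (by simp [height]), fun j _ => ?_⟩
        rw [Tt_eq_zero (a := a) (b := b) (by unfold inR at h ⊢; omega)]
        simp
    · refine ⟨0, (by simp [height]), fun j hj => ?_⟩
      simpa [rootWeight] using Tb_self_mul_Tb (s := s) hq0 hj a a
  | one => exact ⟨0, (by simp [height]), fun j _ => by simp⟩
  | mul x y _ _ hx hy =>
    obtain ⟨ν, hν, hxν⟩ := hx
    obtain ⟨μ, hμ, hyμ⟩ := hy
    exact ⟨ν + μ, by rw [height_add]; omega, hxν.mul hq0 hyμ⟩

end Homogeneous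

section Straightening

variable {Nn : ℕ} {q : ℂ} {s : ℕ → ZMod 2}

lemma exists_Tb_mul_Tt_eq (hq0 : q ≠ 0) (k l a b : ℕ) :
    ∃ c₀ c₁ c₂ : ℂ, Tb Nn q s k l * Tt Nn q s a b
      = c₀ • (Tt Nn q s a b * Tb Nn q s k l)
        + (if b < l then c₁ else 0) • (Tb Nn q s k b * Tt Nn q s a l)
        + c₂ • (Tt Nn q s k b * Tb Nn q s a l) := by
  by_cases h : inR Nn a ∧ inR Nn b ∧ inR Nn k ∧ inR Nn l
  · obtain ⟨ha, hb, hk, hl⟩ := h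
    have H := rtt_tb (q := q) (s := s) ha hb hk hl
    set cB := sg s a b k l * (if b = l then qp q s b else 1)
    have hcB : cB ≠ 0 := mul_ne_zero (sg_ne_zero _ _ _ _ _) (by split_ifs <;> simp [qp_ne_zero hq0])
    set sq := sg s a k k l * (qp q s k - (qp q s k)⁻¹)
    refine ⟨cB⁻¹ * (if a = k then qp q s a else 1), -(cB⁻¹ * sq),
      cB⁻¹ * sq * (if k < a then 1 else 0), ?_⟩
    have hY : cB • (Tb Nn q s k l * Tt Nn q s a b)
        = (if a = k then qp q s a else 1) • (Tt Nn q s a b * Tb Nn q s k l)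
          - sq • ((if b < l then (1 : ℂ) else 0) • (Tb Nn q s k b * Tt Nn q s a l)
            - (if k < a then (1 : ℂ) else 0) • (Tt Nn q s k b * Tb Nn q s a l)) := by
      rw [← H]; abel
    rw [← inv_smul_smul₀ hcB (Tb Nn q s k l * Tt Nn q s a b), hY]
    split_ifs <;> module
  · refine ⟨0, 0, 0, ?_⟩
    have : Tt Nn q s a b = 0 ∨ Tb Nn q s k l = 0 := by
      by_cases hab : inR Nn a ∧ inR Nn b
      · exact Or.inr (Tb_eq_zero (by tauto))
      · exact Or.inl (Tt_eq_zero (by tauto))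
    rcases this with h | h <;> simp [h]

lemma exists_Tb_mul_Tb_self_eq (hq0 : q ≠ 0) (k l a : ℕ) :
    ∃ c : ℂ, Tb Nn q s k l * Tb Nn q s a a = c • (Tb Nn q s a a * Tb Nn q s k l) := by
  by_cases ha : inR Nn a
  · refine ⟨(qp q s a ^ rootWeight k l a)⁻¹, ?_⟩
    rw [Tb_self_mul_Tb hq0 ha, inv_smul_smul₀ (zpow_ne_zero _ (qp_ne_zero hq0 s a))]
  · exact ⟨0, by simp [Tb_eq_zero (a := a) (b := a) (Or.inl ha)]⟩

end Straightening

section Invariance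

variable {Nn : ℕ} {q : ℂ} {s : ℕ → ZMod 2}
variable {V : Type*} [AddCommGroup V] [Module ℂ V] {ρ : UF Nn q s →ₐ[ℂ] Module.End ℂ V}

lemma apply_mem_of_generators {P : Submodule ℂ V}
    (ht : ∀ a b, ∀ w ∈ P, ρ (Tt Nn q s a b) w ∈ P) (hb : ∀ a b, ∀ w ∈ P, ρ (Tb Nn q s a b) w ∈ P)
    (x : UF Nn q s) : ∀ w ∈ P, ρ x w ∈ P := by
  obtain ⟨x, rfl⟩ := RingQuot.mkAlgHom_surjective ℂ (FRel Nn q s) x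
  induction x using FreeAlgebra.induction with
  | grade0 c => intro w hw; simpa using P.smul_mem c hw
  | grade1 g =>
    cases g with
    | t a b => exact ht a b
    | tb a b => exact hb a b
  | mul x y hx hy => intro w hw; simpa using hx _ (hy w hw)
  | add x y hx hy => intro w hw; simpa using add_mem (hx w hw) (hy w hw)

variable {v : V}

lemma Tb_apply_mul_mem_orbitSpan (hq0 : q ≠ 0) {y : UF Nn q s}
    (ih : ∀ k l, ρ (Tb Nn q s k l) (ρ y v) ∈ orbitSpan ρ (lowerBorel Nn q s) v) (l : ℕ) :
    ∀ x ∈ lowerGenerators Nn q s, ∀ k,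
      ρ (Tb Nn q s k l) (ρ (x * y) v) ∈ orbitSpan ρ (lowerBorel Nn q s) v := by
  -- The only term of `t̄_{kl} x y` not handled by `ih` is `t̄_{kb} t_{al} y` with `b < l`.
  induction l using Nat.strong_induction_on with
  | _ l ihl =>
  rintro x (⟨a, b, rfl⟩ | ⟨a, rfl⟩) k
  · obtain ⟨c₀, c₁, c₂, h⟩ := exists_Tb_mul_Tt_eq (Nn := Nn) (s := s) hq0 k l a b
    have e : ρ (Tb Nn q s k l) (ρ (Tt Nn q s a b * y) v)
        = c₀ • ρ (Tt Nn q s a b) (ρ (Tb Nn q s k l) (ρ y v))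
          + (if b < l then c₁ else 0) • ρ (Tb Nn q s k b) (ρ (Tt Nn q s a l * y) v)
          + c₂ • ρ (Tt Nn q s k b) (ρ (Tb Nn q s a l) (ρ y v)) := by
      simp only [← Module.End.mul_apply, ← map_mul, ← mul_assoc, h, add_mul, smul_mul_assoc,
        map_add, map_smul, LinearMap.add_apply, LinearMap.smul_apply]
    rw [e]
    refine add_mem (add_mem ?_ ?_) ?_
    · exact Submodule.smul_mem _ _ (apply_mem_orbitSpan_of_mem (Tt_mem_lowerBorel a b) (ih k l))
    · split_ifs with hbl
      · exact Submodule.smul_mem _ _ (ihl b hbl _ (Or.inl ⟨a, l, rfl⟩) k)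
      · simp
    · exact Submodule.smul_mem _ _ (apply_mem_orbitSpan_of_mem (Tt_mem_lowerBorel k b) (ih a l))
  · obtain ⟨c, h⟩ := exists_Tb_mul_Tb_self_eq (Nn := Nn) (s := s) hq0 k l a
    have e : ρ (Tb Nn q s k l) (ρ (Tb Nn q s a a * y) v)
        = c • ρ (Tb Nn q s a a) (ρ (Tb Nn q s k l) (ρ y v)) := by
      simp only [← Module.End.mul_apply, ← map_mul, ← mul_assoc, h, smul_mul_assoc,
        map_smul, LinearMap.smul_apply]
    rw [e]
    exact Submodule.smul_mem _ _ (apply_mem_orbitSpan_of_mem (Tb_mem_lowerBorel le_rfl) (ih k l))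

lemma Tb_apply_mem_orbitSpan (hq0 : q ≠ 0)
    (hv : ∀ k l, k < l → ρ (Tb Nn q s k l) v = 0) {m : UF Nn q s} (hm : m ∈ lowerBorel Nn q s)
    (k l : ℕ) : ρ (Tb Nn q s k l) (ρ m v) ∈ orbitSpan ρ (lowerBorel Nn q s) v := by
  induction hm using Submonoid.closure_induction_left generalizing k l with
  | one =>
    rw [map_one, Module.End.one_apply]
    rcases lt_or_ge k l with hkl | hlk
    · rw [hv k l hkl]
      exact zero_mem _
    · simpa using apply_mem_orbitSpan (v := v) (Tb_mem_lowerBorel (q := q) (s := s) hlk)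
  | mul_left x hx y _ ih => exact Tb_apply_mul_mem_orbitSpan hq0 ih l x hx k

theorem orbitSpan_lowerBorel_invariant (hq0 : q ≠ 0)
    (hv : ∀ k l, k < l → ρ (Tb Nn q s k l) v = 0) (x : UF Nn q s) {w : V}
    (hw : w ∈ orbitSpan ρ (lowerBorel Nn q s) v) : ρ x w ∈ orbitSpan ρ (lowerBorel Nn q s) v :=
  apply_mem_of_generators (fun a b _ hw => apply_mem_orbitSpan_of_mem (Tt_mem_lowerBorel a b) hw)
    (fun a b _ hw => apply_mem_orbitSpan_of_forall
      (fun _ hm => Tb_apply_mem_orbitSpan hq0 hv hm a b) hw) x w hw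

end Invariance

section HighestWeight

variable {Nn : ℕ} {q : ℂ} {s : ℕ → ZMod 2}
variable {V : Type} [AddCommGroup V] [Module ℂ V] {ρ : UF Nn q s →ₐ[ℂ] Module.End ℂ V}
variable {lam : ℕ → ℂ} {ζ : V}

lemma Tt_self_apply (hlam : ∀ j : ℕ, 1 ≤ j → j ≤ Nn → lam j ≠ 0)
    (hhw1 : ∀ j : ℕ, 1 ≤ j → j ≤ Nn → ρ (Tb Nn q s j j) ζ = lam j • ζ) {j : ℕ} (hj : inR Nn j) :
    ρ (Tt Nn q s j j) ζ = (lam j)⁻¹ • ζ := by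
  have h := congrArg (fun x => ρ x ζ) (Tt_mul_Tb_self (q := q) (s := s) hj)
  simp only [map_mul, Module.End.mul_apply, hhw1 j hj.1 hj.2, map_smul, map_one,
    Module.End.one_apply] at h
  rw [eq_inv_smul_iff₀ (hlam j hj.1 hj.2)]
  exact h

lemma IsHomogeneous.apply_eigenvector {x : UF Nn q s} {ν : ℕ → ℤ} (hx : IsHomogeneous x ν)
    (hhw1 : ∀ j : ℕ, 1 ≤ j → j ≤ Nn → ρ (Tb Nn q s j j) ζ = lam j • ζ) {j : ℕ} (hj : inR Nn j) :
    ρ (Tb Nn q s j j) (ρ x ζ) = (qp q s j ^ ν j * lam j) • ρ x ζ := by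
  rw [← Module.End.mul_apply, ← map_mul, hx j hj, map_smul, map_mul, LinearMap.smul_apply,
    Module.End.mul_apply, hhw1 j hj.1 hj.2, map_smul, smul_smul]

lemma Tb_apply_Tt_succ_apply_eq_zero (hq0 : q ≠ 0) (hlam : ∀ j : ℕ, 1 ≤ j → j ≤ Nn → lam j ≠ 0)
    (hhw0 : ∀ j k : ℕ, 1 ≤ j → j < k → k ≤ Nn → ρ (Tb Nn q s j k) ζ = 0)
    (hhw1 : ∀ j : ℕ, 1 ≤ j → j ≤ Nn → ρ (Tb Nn q s j j) ζ = lam j • ζ)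
    {i : ℕ} (hi1 : 1 ≤ i) (hi2 : i + 1 ≤ Nn) (hatyp : lam i = lam (i + 1))
    {a b : ℕ} (hab : a < b) : ρ (Tb Nn q s a b) (ρ (Tt Nn q s (i + 1) i) ζ) = 0 := by
  by_cases hr : inR Nn a ∧ inR Nn b
  swap
  · rw [Tb_eq_zero (a := a) (b := b) (by tauto)]; simp
  have hri : inR Nn i := ⟨hi1, by omega⟩
  have hri1 : inR Nn (i + 1) := ⟨by omega, hi2⟩
  have H := congrArg (fun x => ρ x ζ) (rtt_tb (q := q) (s := s) hri1 hri hr.1 hr.2)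
  simp only [map_sub, map_smul, map_mul, LinearMap.sub_apply, LinearMap.smul_apply,
    Module.End.mul_apply, hhw0 a b hr.1.1 hab hr.2.2, map_zero, smul_zero, zero_sub] at H
  have hcross : (if i < b then (1 : ℂ) else 0) • ρ (Tb Nn q s a i) (ρ (Tt Nn q s (i + 1) b) ζ)
      - (if a < i + 1 then (1 : ℂ) else 0) • ρ (Tt Nn q s a i) (ρ (Tb Nn q s (i + 1) b) ζ)
      = 0 := by
    rcases lt_trichotomy b (i + 1) with hb | rfl | hb
    · simp [Tb_eq_zero (a := i + 1) (b := b) (Or.inr (Or.inr hb)), show ¬ i < b by omega]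
    · rw [Tt_self_apply hlam hhw1 hri1, hhw1 (i + 1) hri1.1 hri1.2, map_smul, map_smul,
        if_pos (by omega), if_pos hab]
      rcases (Nat.lt_succ_iff.mp hab).lt_or_eq with hai | rfl
      · simp [hhw0 a i hr.1.1 hai (by omega), Tt_eq_zero (a := a) (b := i) (Or.inr (Or.inr hai))]
      · -- atypicality: the two cross terms are `λ_{i+1}⁻¹ λ_i ζ` and `λ_{i+1} λ_i⁻¹ ζ`
        rw [Tt_self_apply hlam hhw1 hri, hhw1 a hi1 (by omega), hatyp]
        simp [smul_smul, hlam _ hri1.1 hri1.2]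
    · simp [Tt_eq_zero (a := i + 1) (b := b) (Or.inr (Or.inr hb)),
        hhw0 (i + 1) b hri1.1 hb hr.2.2]
  rw [hcross, smul_zero, neg_eq_zero, smul_eq_zero] at H
  exact H.resolve_left (mul_ne_zero (sg_ne_zero _ _ _ _ _) (by split_ifs <;> simp [qp_ne_zero hq0]))

lemma exists_weight_ne_of_mem_lowerBorel (hq0 : q ≠ 0) (hqru : ∀ k : ℕ, k ≠ 0 → q ^ k ≠ 1)
    (hlam : ∀ j : ℕ, 1 ≤ j → j ≤ Nn → lam j ≠ 0)
    (hhw1 : ∀ j : ℕ, 1 ≤ j → j ≤ Nn → ρ (Tb Nn q s j j) ζ = lam j • ζ)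
    {i : ℕ} (hi1 : 1 ≤ i) (hi2 : i + 1 ≤ Nn) {m : UF Nn q s} (hm : m ∈ lowerBorel Nn q s) :
    ∃ χ ≠ (fun j : {j // inR Nn j} => lam j), ∀ j : {j // inR Nn j},
      ρ (Tb Nn q s j j) (ρ m (ρ (Tt Nn q s (i + 1) i) ζ))
        = χ j • ρ m (ρ (Tt Nn q s (i + 1) i) ζ) := by
  obtain ⟨ν, hν, hmν⟩ := exists_isHomogeneous_of_mem_lowerBorel hq0 hm
  have hx := hmν.mul hq0 (fun j hj => Tb_self_mul_Tt hq0 hj (i + 1) i)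
  have hh : height Nn (ν + rootWeight (i + 1) i) ≠ 0 := by
    rw [height_add, height_rootWeight ⟨by omega, hi2⟩ ⟨hi1, by omega⟩]
    omega
  obtain ⟨j, hj, hne⟩ := exists_ne_zero_of_height_ne_zero hh
  refine ⟨fun j => qp q s j ^ (ν + rootWeight (i + 1) i) j * lam j, fun h => ?_,
    fun j => by simpa only [map_mul, Module.End.mul_apply] using hx.apply_eigenvector hhw1 j.2⟩
  have h1 : qp q s j ^ (ν + rootWeight (i + 1) i) j * lam j = 1 * lam j := by
    simpa using congrFun h ⟨j, hj⟩
  exact qp_zpow_ne_one hqru s j hne (mul_right_cancel₀ (hlam j hj.1 hj.2) h1)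

theorem Tt_succ_apply_eq_zero_of_atypical (hq0 : q ≠ 0) (hqru : ∀ k : ℕ, k ≠ 0 → q ^ k ≠ 1)
    (hlam : ∀ j : ℕ, 1 ≤ j → j ≤ Nn → lam j ≠ 0) (hζ : ζ ≠ 0)
    (hhw0 : ∀ j k : ℕ, 1 ≤ j → j < k → k ≤ Nn → ρ (Tb Nn q s j k) ζ = 0)
    (hhw1 : ∀ j : ℕ, 1 ≤ j → j ≤ Nn → ρ (Tb Nn q s j j) ζ = lam j • ζ)
    (hirr : ∀ W : Submodule ℂ V,
      (∀ (x : UF Nn q s) (w : V), w ∈ W → ρ x w ∈ W) → W = ⊥ ∨ W = ⊤)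
    {i : ℕ} (hi1 : 1 ≤ i) (hi2 : i + 1 ≤ Nn) (hatyp : lam i = lam (i + 1)) :
    ρ (Tt Nn q s (i + 1) i) ζ = 0 := by
  set v := ρ (Tt Nn q s (i + 1) i) ζ
  have hv : ∀ k l, k < l → ρ (Tb Nn q s k l) v = 0 := fun k l =>
    Tb_apply_Tt_succ_apply_eq_zero hq0 hlam hhw0 hhw1 hi1 hi2 hatyp
  rcases hirr _ (fun x w hw => orbitSpan_lowerBorel_invariant hq0 hv x hw) with hP | hP
  · simpa [hP] using apply_mem_orbitSpan (ρ := ρ) (v := v) (lowerBorel Nn q s).one_mem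
  · have hcomm : ∀ j k : {j // inR Nn j}, Commute (ρ (Tb Nn q s j j)) (ρ (Tb Nn q s k k)) :=
      fun j k => by
        simpa [Commute, SemiconjBy, rootWeight] using congrArg ρ (Tb_self_mul_Tb hq0 j.2 k k)
    refine absurd (hP ▸ Submodule.mem_top) (not_mem_span_of_forall_eigenvector _ hcomm hζ
      (fun j => hhw1 j j.2.1 j.2.2) ?_)
    rintro _ ⟨m, hm, rfl⟩
    exact exists_weight_ne_of_mem_lowerBorel hq0 hqru hlam hhw1 hi1 hi2 hm

end HighestWeight

def oddReflectionSign (s' : ℕ → ZMod 2) (i j : ℕ) : ℂ :=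
  if j = i then neg1 (s' (i + 1)) else if j = i + 1 then neg1 (s' i) else 1

lemma oddReflectionSign_eq_one_or_eq_neg_one (s' : ℕ → ZMod 2) (i j : ℕ) :
    oddReflectionSign s' i j = 1 ∨ oddReflectionSign s' i j = -1 := by
  unfold oddReflectionSign
  split_ifs
  · exact neg1_eq_one_or_eq_neg_one _
  · exact neg1_eq_one_or_eq_neg_one _
  · exact Or.inl rfl

section OddReflection

variable {Nn : ℕ} {q : ℂ} {s s' : ℕ → ZMod 2} {i : ℕ} {β : UF Nn q s ≃ₐ[ℂ] UF Nn q s'}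
variable {V : Type} [AddCommGroup V] [Module ℂ V] {ρ : UF Nn q s →ₐ[ℂ] Module.End ℂ V}
variable {lam : ℕ → ℂ} {ζ : V}

local notation "ρ'" => ρ.comp β.symm.toAlgHom

variable (hβ : OddReflClauses Nn q s s' i β)
include hβ

lemma comp_symm_Tb_diag_self_apply
    (hhw1 : ∀ j : ℕ, 1 ≤ j → j ≤ Nn → ρ (Tb Nn q s j j) ζ = lam j • ζ) (hi2 : i + 1 ≤ Nn) :
    ρ' (Tb Nn q s' i i) ζ = (neg1 (s' (i + 1)) * lam (i + 1)) • ζ := by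
  obtain ⟨-, -, -, -, -, -, -, -, -, h, -⟩ := hβ
  rw [comp_symm_eq_inv_smul β ρ (neg1_ne_zero _) h, LinearMap.smul_apply,
    hhw1 (i + 1) (by omega) hi2, smul_smul, neg1_inv]

lemma comp_symm_Tb_diag_succ_apply
    (hhw1 : ∀ j : ℕ, 1 ≤ j → j ≤ Nn → ρ (Tb Nn q s j j) ζ = lam j • ζ)
    (hi1 : 1 ≤ i) (hi2 : i + 1 ≤ Nn) :
    ρ' (Tb Nn q s' (i + 1) (i + 1)) ζ = (neg1 (s' i) * lam i) • ζ := by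
  obtain ⟨-, -, -, -, -, -, -, -, h, -⟩ := hβ
  rw [comp_symm_eq_inv_smul β ρ (neg1_ne_zero _) h, LinearMap.smul_apply,
    hhw1 i hi1 (by omega), smul_smul, neg1_inv]

lemma comp_symm_Tt_diag_self_apply (hlam : ∀ j : ℕ, 1 ≤ j → j ≤ Nn → lam j ≠ 0)
    (hhw1 : ∀ j : ℕ, 1 ≤ j → j ≤ Nn → ρ (Tb Nn q s j j) ζ = lam j • ζ) (hi2 : i + 1 ≤ Nn) :
    ρ' (Tt Nn q s' i i) ζ = (neg1 (s' (i + 1)) * (lam (i + 1))⁻¹) • ζ := by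
  obtain ⟨-, h, -⟩ := hβ
  rw [comp_symm_eq_inv_smul β ρ (neg1_ne_zero _) h, LinearMap.smul_apply,
    Tt_self_apply hlam hhw1 ⟨by omega, hi2⟩, smul_smul, neg1_inv]

lemma comp_symm_Tb_self_succ_apply_eq_zero (hq0 : q ≠ 0) (hlam : ∀ j : ℕ, 1 ≤ j → j ≤ Nn → lam j ≠ 0)
    (hhw1 : ∀ j : ℕ, 1 ≤ j → j ≤ Nn → ρ (Tb Nn q s j j) ζ = lam j • ζ) (hi2 : i + 1 ≤ Nn)
    (hv : ρ (Tt Nn q s (i + 1) i) ζ = 0) : ρ' (Tb Nn q s' i (i + 1)) ζ = 0 := by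
  have hTt := comp_symm_Tt_diag_self_apply hβ hlam hhw1 hi2
  obtain ⟨-, -, h, -⟩ := hβ
  have h' := congrArg (fun x => ρ' x ζ) h
  simp only [comp_symm_apply_apply, hv, map_smul, map_mul, LinearMap.smul_apply,
    Module.End.mul_apply, hTt] at h'
  simpa [neg1_ne_zero, qp_ne_zero hq0, hlam (i + 1) (by omega) hi2] using h'.symm

lemma comp_symm_Tb_lt_self_apply_eq_zero
    (hhw0 : ∀ j k : ℕ, 1 ≤ j → j < k → k ≤ Nn → ρ (Tb Nn q s j k) ζ = 0)
    (hi2 : i + 1 ≤ Nn) {k : ℕ} (hk : 1 ≤ k) (hki : k < i) : ρ' (Tb Nn q s' k i) ζ = 0 := by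
  obtain ⟨-, -, -, -, -, -, -, -, -, -, -, -, h, -⟩ := hβ
  rw [comp_symm_eq_inv_smul β ρ (neg_ne_zero.mpr (sg_ne_zero _ _ _ _ _)) (h k hki),
    LinearMap.smul_apply, hhw0 k (i + 1) hk (by omega) hi2, smul_zero]

lemma comp_symm_Tb_self_gt_apply_eq_zero
    (hhw0 : ∀ j k : ℕ, 1 ≤ j → j < k → k ≤ Nn → ρ (Tb Nn q s j k) ζ = 0)
    (hi1 : 1 ≤ i) {l : ℕ} (hil : i + 2 ≤ l) (hl : l ≤ Nn) : ρ' (Tb Nn q s' i l) ζ = 0 := by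
  obtain ⟨-, -, -, -, -, -, -, -, -, -, -, -, -, -, h, -⟩ := hβ
  rw [comp_symm_eq_inv_smul β ρ (neg_ne_zero.mpr (sg_ne_zero _ _ _ _ _)) (h l hil),
    LinearMap.smul_apply, hhw0 (i + 1) l (by omega) (by omega) hl, smul_zero]

lemma comp_symm_Tb_lt_succ_apply_eq_zero (hq0 : q ≠ 0)
    (hlam : ∀ j : ℕ, 1 ≤ j → j ≤ Nn → lam j ≠ 0)
    (hhw0 : ∀ j k : ℕ, 1 ≤ j → j < k → k ≤ Nn → ρ (Tb Nn q s j k) ζ = 0)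
    (hhw1 : ∀ j : ℕ, 1 ≤ j → j ≤ Nn → ρ (Tb Nn q s j j) ζ = lam j • ζ) (hi2 : i + 1 ≤ Nn)
    (hv : ρ (Tt Nn q s (i + 1) i) ζ = 0) {k : ℕ} (hk : 1 ≤ k) (hki : k < i) :
    ρ' (Tb Nn q s' k (i + 1)) ζ = 0 := by
  have hTt := comp_symm_Tt_diag_self_apply hβ hlam hhw1 hi2
  have hTb := comp_symm_Tb_self_succ_apply_eq_zero hβ hq0 hlam hhw1 hi2 hv
  obtain ⟨-, -, -, -, -, -, -, -, -, -, -, h, -⟩ := hβ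
  have h' := congrArg (fun x => ρ' x ζ) (h k hki)
  simp only [comp_symm_apply_apply, hhw0 k i hk hki (by omega), map_sub, map_smul, map_mul,
    LinearMap.sub_apply, LinearMap.smul_apply, Module.End.mul_apply, hTt, hTb, smul_zero,
    map_zero, sub_zero] at h'
  simpa [neg1_ne_zero, sg_ne_zero, qp_ne_zero hq0] using h'.symm

lemma comp_symm_Tb_succ_gt_apply_eq_zero (hq0 : q ≠ 0)
    (hhw0 : ∀ j k : ℕ, 1 ≤ j → j < k → k ≤ Nn → ρ (Tb Nn q s j k) ζ = 0)
    (hhw1 : ∀ j : ℕ, 1 ≤ j → j ≤ Nn → ρ (Tb Nn q s j j) ζ = lam j • ζ) (hi1 : 1 ≤ i)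
    {l : ℕ} (hil : i + 2 ≤ l) (hl : l ≤ Nn) : ρ' (Tb Nn q s' (i + 1) l) ζ = 0 := by
  have hTb := comp_symm_Tb_diag_self_apply hβ hhw1 (by omega)
  have hTb' := comp_symm_Tb_self_gt_apply_eq_zero hβ hhw0 hi1 hil hl
  obtain ⟨-, -, -, -, -, -, -, -, -, -, -, -, -, h, -⟩ := hβ
  have h' := congrArg (fun x => ρ' x ζ) (h l hil)
  simp only [comp_symm_apply_apply, hhw0 i l hi1 (by omega) hl, map_sub, map_smul, map_mul,
    LinearMap.sub_apply, LinearMap.smul_apply, Module.End.mul_apply, hTb, hTb', smul_zero,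
    map_zero, sub_zero] at h'
  simpa [neg1_ne_zero, sg_ne_zero, qp_ne_zero hq0] using h'.symm

lemma comp_symm_Tb_apply_eq_zero_of_lt (hq0 : q ≠ 0)
    (hlam : ∀ j : ℕ, 1 ≤ j → j ≤ Nn → lam j ≠ 0)
    (hhw0 : ∀ j k : ℕ, 1 ≤ j → j < k → k ≤ Nn → ρ (Tb Nn q s j k) ζ = 0)
    (hhw1 : ∀ j : ℕ, 1 ≤ j → j ≤ Nn → ρ (Tb Nn q s j j) ζ = lam j • ζ)
    (hi1 : 1 ≤ i) (hi2 : i + 1 ≤ Nn) (hv : ρ (Tt Nn q s (i + 1) i) ζ = 0)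
    {j k : ℕ} (hj : 1 ≤ j) (hjk : j < k) (hk : k ≤ Nn) : ρ' (Tb Nn q s' j k) ζ = 0 := by
  by_cases hki : k = i
  · subst hki
    exact comp_symm_Tb_lt_self_apply_eq_zero hβ hhw0 hi2 hj hjk
  by_cases hki1 : k = i + 1
  · subst hki1
    rcases (Nat.lt_succ_iff.mp hjk).lt_or_eq with hji | rfl
    · exact comp_symm_Tb_lt_succ_apply_eq_zero hβ hq0 hlam hhw0 hhw1 hi2 hv hj hji
    · exact comp_symm_Tb_self_succ_apply_eq_zero hβ hq0 hlam hhw1 hi2 hv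
  by_cases hji : j = i
  · subst hji
    exact comp_symm_Tb_self_gt_apply_eq_zero hβ hhw0 hi1 (by omega) hk
  by_cases hji1 : j = i + 1
  · subst hji1
    exact comp_symm_Tb_succ_gt_apply_eq_zero hβ hq0 hhw0 hhw1 hi1 (by omega) hk
  obtain ⟨-, -, -, -, -, -, -, -, -, -, -, -, -, -, -, h⟩ := hβ
  rw [← h j k (by omega) (by omega) (by omega) (by omega) (by omega) (by omega) (by omega),
    comp_symm_apply_apply]
  exact hhw0 j k hj hjk hk

lemma comp_symm_Tb_self_apply
    (hhw1 : ∀ j : ℕ, 1 ≤ j → j ≤ Nn → ρ (Tb Nn q s j j) ζ = lam j • ζ)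
    (hi1 : 1 ≤ i) (hi2 : i + 1 ≤ Nn) {j : ℕ} (hj : 1 ≤ j) (hjN : j ≤ Nn) :
    ρ' (Tb Nn q s' j j) ζ = (oddReflectionSign s' i j
      * (if j = i then lam (i + 1) else if j = i + 1 then lam i else lam j)) • ζ := by
  by_cases hji : j = i
  · subst hji
    simpa [oddReflectionSign] using comp_symm_Tb_diag_self_apply hβ hhw1 hi2
  by_cases hji1 : j = i + 1
  · subst hji1
    simpa [oddReflectionSign] using comp_symm_Tb_diag_succ_apply hβ hhw1 hi1 hi2
  obtain ⟨-, -, -, -, -, -, -, -, -, -, -, -, -, -, -, h⟩ := hβ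
  rw [← h j j (by omega) (by omega) (by omega) (by omega) (by omega) (by omega) (by omega),
    comp_symm_apply_apply, hhw1 j hj hjN]
  simp [oddReflectionSign, hji, hji1]

end OddReflection

theorem odd_reflection_transition_atypical_general (Nn : ℕ)
    (s : ℕ → ZMod 2)
    (q : ℂ) (hq0 : q ≠ 0) (hqru : ∀ k : ℕ, k ≠ 0 → q ^ k ≠ 1)
    (i : ℕ) (hi1 : 1 ≤ i) (hi2 : i + 1 ≤ Nn)
    (s' : ℕ → ZMod 2)
    (β : UF Nn q s ≃ₐ[ℂ] UF Nn q s') (hβ : OddReflClauses Nn q s s' i β)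
    (V : Type) [AddCommGroup V] [Module ℂ V]
    (ρ : UF Nn q s →ₐ[ℂ] Module.End ℂ V)
    (lam : ℕ → ℂ) (hlam : ∀ j : ℕ, 1 ≤ j → j ≤ Nn → lam j ≠ 0)
    (ζ : V) (hζ : ζ ≠ 0)
    (hhw0 : ∀ j k : ℕ, 1 ≤ j → j < k → k ≤ Nn → ρ (Tb Nn q s j k) ζ = 0)
    (hhw1 : ∀ j : ℕ, 1 ≤ j → j ≤ Nn → ρ (Tb Nn q s j j) ζ = lam j • ζ)
    (hgen : Function.Surjective (fun x : UF Nn q s => ρ x ζ))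
    (hirr : ∀ W : Submodule ℂ V,
      (∀ (x : UF Nn q s) (w : V), w ∈ W → ρ x w ∈ W) → W = ⊥ ∨ W = ⊤)
    (hatyp : lam i = lam (i + 1)) :
    (∀ j k : ℕ, 1 ≤ j → j < k → k ≤ Nn →
      (ρ.comp β.symm.toAlgHom) (Tb Nn q s' j k) ζ = 0) ∧
    (∃ ε : ℕ → ℂ, (∀ j : ℕ, ε j = 1 ∨ ε j = -1) ∧
      ∀ j : ℕ, 1 ≤ j → j ≤ Nn →
        (ρ.comp β.symm.toAlgHom) (Tb Nn q s' j j) ζ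
          = (ε j * (if j = i then lam (i + 1)
              else if j = i + 1 then lam i else lam j)) • ζ) ∧
    Function.Surjective (fun x : UF Nn q s' => (ρ.comp β.symm.toAlgHom) x ζ) ∧
    (∀ W : Submodule ℂ V,
      (∀ (x : UF Nn q s') (w : V), w ∈ W → (ρ.comp β.symm.toAlgHom) x w ∈ W) →
      W = ⊥ ∨ W = ⊤) := by
  have hv : ρ (Tt Nn q s (i + 1) i) ζ = 0 :=
    Tt_succ_apply_eq_zero_of_atypical hq0 hqru hlam hζ hhw0 hhw1 hirr hi1 hi2 hatyp
  refine ⟨fun j k hj hjk hk => ?_, ⟨oddReflectionSign s' i,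
    oddReflectionSign_eq_one_or_eq_neg_one s' i, fun j hj hjN => ?_⟩,
    surjective_comp_symm_apply β ρ hgen, irreducible_comp_symm β ρ hirr⟩
  · exact comp_symm_Tb_apply_eq_zero_of_lt hβ hq0 hlam hhw0 hhw1 hi1 hi2 hv hj hjk hk
  · exact comp_symm_Tb_self_apply hβ hhw1 hi1 hi2 hj hjN

/-- Transition rule through an odd reflection, atypical case:
if `λ_i = λ_{i+1}` then the transported module is an irreducible highest weight module
with the *same* maximal vector `ζ` and (up to a sign twist) highest weight
`(λ_1, …, λ_{i−1}, λ_{i+1}, λ_i, λ_{i+2}, …, λ_N)`. -/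
theorem odd_reflection_transition_atypical (m n Nn : ℕ) (hNn : Nn = m + n) (hN2 : 2 ≤ Nn)
    (s : ℕ → ZMod 2)
    (hm : ((Finset.Icc 1 Nn).filter (fun i => s i = 0)).card = m)
    (hn : ((Finset.Icc 1 Nn).filter (fun i => s i = 1)).card = n)
    (q : ℂ) (hq0 : q ≠ 0) (hqru : ∀ k : ℕ, k ≠ 0 → q ^ k ≠ 1)
    (i : ℕ) (hi1 : 1 ≤ i) (hi2 : i + 1 ≤ Nn) (hodd : s i ≠ s (i + 1))
    (s' : ℕ → ZMod 2)
    (hs' : ∀ j : ℕ, s' j = if j = i then s (i + 1) else if j = i + 1 then s i else s j)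
    (β : UF Nn q s ≃ₐ[ℂ] UF Nn q s') (hβ : OddReflClauses Nn q s s' i β)
    (V : Type) [AddCommGroup V] [Module ℂ V]
    (ρ : UF Nn q s →ₐ[ℂ] Module.End ℂ V)
    (lam : ℕ → ℂ) (hlam : ∀ j : ℕ, 1 ≤ j → j ≤ Nn → lam j ≠ 0)
    (ζ : V) (hζ : ζ ≠ 0)
    (hhw0 : ∀ j k : ℕ, 1 ≤ j → j < k → k ≤ Nn → ρ (Tb Nn q s j k) ζ = 0)
    (hhw1 : ∀ j : ℕ, 1 ≤ j → j ≤ Nn → ρ (Tb Nn q s j j) ζ = lam j • ζ)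
    (hgen : Function.Surjective (fun x : UF Nn q s => ρ x ζ))
    (hirr : ∀ W : Submodule ℂ V,
      (∀ (x : UF Nn q s) (w : V), w ∈ W → ρ x w ∈ W) → W = ⊥ ∨ W = ⊤)
    (hatyp : lam i = lam (i + 1)) :
    (∀ j k : ℕ, 1 ≤ j → j < k → k ≤ Nn →
      (ρ.comp β.symm.toAlgHom) (Tb Nn q s' j k) ζ = 0) ∧
    (∃ ε : ℕ → ℂ, (∀ j : ℕ, ε j = 1 ∨ ε j = -1) ∧
      ∀ j : ℕ, 1 ≤ j → j ≤ Nn →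
        (ρ.comp β.symm.toAlgHom) (Tb Nn q s' j j) ζ
          = (ε j * (if j = i then lam (i + 1)
              else if j = i + 1 then lam i else lam j)) • ζ) ∧
    Function.Surjective (fun x : UF Nn q s' => (ρ.comp β.symm.toAlgHom) x ζ) ∧
    (∀ W : Submodule ℂ V,
      (∀ (x : UF Nn q s') (w : V), w ∈ W → (ρ.comp β.symm.toAlgHom) x w ∈ W) →
      W = ⊥ ∨ W = ⊤) :=
  odd_reflection_transition_atypical_general Nn s q hq0 hqru i hi1 hi2 s' β hβ V ρ lam hlam ζ hζ
    hhw0 hhw1 hgen hirr hatyp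

end

end Stmt10
end

section
/- Every nonzero finite-dimensional simple module V over U_q(ĝl_{m|n,s}) is a highest weight module: there exist a nonzero vector ζ ∈ V and complex numbers λ_i^{(r)}, λ̄_i^{(r)} (1 ≤ i ≤ N, r ≥ 0) such that t_{ij}^{(r)} ζ = t̄_{ij}^{(r)} ζ = 0 for all 1 ≤ i < j ≤ N and r ≥ 0, t_{ii}^{(r)} ζ = λ_i^{(r)} ζ and t̄_{ii}^{(r)} ζ = λ̄_i^{(r)} ζ for all i, r, and ζ generates V. -/
/-!
The operators `t_{aa}^{(0)}` commute, so `V` contains a weight vector for them, and the RTT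
relation with `t_{aa}(u)` on the left, read at `u^1` (where `t(u)` has no term), shows that
`t_{bc}^{(r)}, t̄_{bc}^{(r)}` with `b < c` multiply the weight by `q_c` in coordinate `c` and by
`q_b⁻¹` in coordinate `b`. Since `q` is not a root of unity, the finitely many weights of the form
`q^e μ₀` are indexed by finitely many `e ∈ ℤ^N`, and each raising step increases the height
`∑ a d_a e_a` by `c - b > 0`; so the weight space of a weight of maximal height is annihilated by
all raising operators. On such vectors the RTT relations become recursions in the two series
variables that die out in one direction, which forces all diagonal coefficients to commute
(the pair `t_{pp}, t̄_{rr}` with `r < p` needs a second-order recursion with roots `q_r^{±2}`).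
A common eigenvector of them in that weight space is a highest weight vector, and it generates `V`
because `V` is simple.
-/

namespace Stmt14

noncomputable section

/-- `(-1)^x` for `x : ZMod 2`. -/
def neg1 (x : ZMod 2) : ℂ := if x = 0 then 1 else -1

/-- `q_i = q^{d_i}` where `d_i = (-1)^{s_i}`. -/
def qp (q : ℂ) (s : ℕ → ZMod 2) (i : ℕ) : ℂ := if s i = 0 then q else q⁻¹

/-- The sign `ς_{ab;cd} = (−1)^{(|a|+|b|)(|c|+|d|)}`. -/
def sg (s : ℕ → ZMod 2) (a b c d : ℕ) : ℂ := neg1 ((s a + s b) * (s c + s d))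

/-- `i` lies in the index range `{1, …, Nn}`. -/
def inR (Nn i : ℕ) : Prop := 1 ≤ i ∧ i ≤ Nn

/-- Generators `t_{ij}^{(r)}`, `t̄_{ij}^{(r)}` of the quantum affine general linear
superalgebra. -/
inductive AGen : Type
  | t : ℕ → ℕ → ℕ → AGen
  | tb : ℕ → ℕ → ℕ → AGen

/-- The free algebra on the affine generators. -/
abbrev AFA : Type := FreeAlgebra ℂ AGen

/-- The generator `t_{ij}^{(r)}` in the free algebra. -/
def fat (i j r : ℕ) : AFA := FreeAlgebra.ι ℂ (AGen.t i j r)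

/-- The generator `t̄_{ij}^{(r)}` in the free algebra. -/
def fab (i j r : ℕ) : AFA := FreeAlgebra.ι ℂ (AGen.tb i j r)

/-- The coefficient of `u^e` in the series `γ_{ij}(u)`, where `g = false` selects
`t_{ij}(u) = Σ_{r≥0} t_{ij}^{(r)} u^{−r}` and `g = true` selects
`t̄_{ij}(u) = Σ_{r≥0} t̄_{ij}^{(r)} u^{r}`. -/
def acf (g : Bool) (i j : ℕ) (e : ℤ) : AFA :=
  if g then (if 0 ≤ e then fab i j e.toNat else 0)
  else (if e ≤ 0 then fat i j (-e).toNat else 0)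

/-- The coefficient of `u^x v^y` in the left-hand side of the RTT series identity
`(q_i^{−δ_{ik}} v − q_i^{δ_{ik}} u) γ_{ij}(u) γ'_{kl}(v)
 − ς_{ij;kl} (q_j^{−δ_{jl}} v − q_j^{δ_{jl}} u) γ'_{kl}(v) γ_{ij}(u)`,
for series with coefficient functions `c` (in `u`) and `c'` (in `v`). -/
def relL {A : Type} [Ring A] [Algebra ℂ A] (q : ℂ) (s : ℕ → ZMod 2)
    (c c' : ℕ → ℕ → ℤ → A) (i j k l : ℕ) (x y : ℤ) : A :=
  (if i = k then (qp q s i)⁻¹ else 1) • (c i j x * c' k l (y - 1))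
    - (if i = k then qp q s i else 1) • (c i j (x - 1) * c' k l y)
    - (sg s i j k l * (if j = l then (qp q s j)⁻¹ else 1)) • (c' k l (y - 1) * c i j x)
    + (sg s i j k l * (if j = l then qp q s j else 1)) • (c' k l y * c i j (x - 1))

/-- The coefficient of `u^x v^y` in the right-hand side of the RTT series identity
`ς_{ik;kl} (q_k − q_k^{−1}) ((δ_{k<i} u + δ_{i<k} v) γ_{kj}(u) γ'_{il}(v)
 − (δ_{j<l} u + δ_{l<j} v) γ'_{kj}(v) γ_{il}(u))`. -/
def relR {A : Type} [Ring A] [Algebra ℂ A] (q : ℂ) (s : ℕ → ZMod 2)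
    (c c' : ℕ → ℕ → ℤ → A) (i j k l : ℕ) (x y : ℤ) : A :=
  (sg s i k k l * (qp q s k - (qp q s k)⁻¹)) •
    ((if k < i then (1 : ℂ) else 0) • (c k j (x - 1) * c' i l y)
      + (if i < k then (1 : ℂ) else 0) • (c k j x * c' i l (y - 1))
      - (if j < l then (1 : ℂ) else 0) • (c' k j y * c i l (x - 1))
      - (if l < j then (1 : ℂ) else 0) • (c' k j (y - 1) * c i l x))

/-- Defining relations of the quantum affine general linear superalgebra
`U_q(ĝl_{m|n,s})` (trivial central charge). -/
inductive ARel (Nn : ℕ) (q : ℂ) (s : ℕ → ZMod 2) : AFA → AFA → Prop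
  | zt : ∀ i j r : ℕ, ¬ (inR Nn i ∧ inR Nn j) → ARel Nn q s (fat i j r) 0
  | zb : ∀ i j r : ℕ, ¬ (inR Nn i ∧ inR Nn j) → ARel Nn q s (fab i j r) 0
  | zt0 : ∀ i j : ℕ, i < j → ARel Nn q s (fat i j 0) 0
  | zb0 : ∀ i j : ℕ, j < i → ARel Nn q s (fab i j 0) 0
  | unit_tb : ∀ i : ℕ, inR Nn i → ARel Nn q s (fat i i 0 * fab i i 0) 1
  | unit_bt : ∀ i : ℕ, inR Nn i → ARel Nn q s (fab i i 0 * fat i i 0) 1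
  | rtt : ∀ g g' : Bool, ¬ (g = true ∧ g' = false) → ∀ i j k l : ℕ,
      inR Nn i → inR Nn j → inR Nn k → inR Nn l → ∀ x y : ℤ,
      ARel Nn q s (relL q s (acf g) (acf g') i j k l x y)
        (relR q s (acf g) (acf g') i j k l x y)

/-- The quantum affine general linear superalgebra `U_q(ĝl_{m|n,s})`. -/
abbrev UA (Nn : ℕ) (q : ℂ) (s : ℕ → ZMod 2) : Type := RingQuot (ARel Nn q s)

/-- The generator `t_{ij}^{(r)}` of `U_q(ĝl_{m|n,s})`. -/
def AT (Nn : ℕ) (q : ℂ) (s : ℕ → ZMod 2) (i j r : ℕ) : UA Nn q s :=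
  RingQuot.mkAlgHom ℂ (ARel Nn q s) (fat i j r)

/-- The generator `t̄_{ij}^{(r)}` of `U_q(ĝl_{m|n,s})`. -/
def AB (Nn : ℕ) (q : ℂ) (s : ℕ → ZMod 2) (i j r : ℕ) : UA Nn q s :=
  RingQuot.mkAlgHom ℂ (ARel Nn q s) (fab i j r)

open Module

section Recursion

variable {K V : Type*} [Field K] [AddCommGroup V] [Module K V]

theorem iterate_of_rec {Z : ℤ → ℤ → V} {c : K} (h : ∀ x y, Z x (y - 1) = c • Z (x - 1) y)
    (k : ℕ) (x y : ℤ) : Z (x + k) (y - k) = c ^ k • Z x y := by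
  induction k generalizing x y with
  | zero => simp
  | succ k ih =>
    have step := h (x + k + 1) (y - k)
    rw [add_sub_cancel_right] at step
    rw [Nat.cast_succ, ← add_assoc, ← sub_sub, step, ih, smul_smul, pow_succ']

theorem eq_zero_of_rec_of_eq_zero_above {Z : ℤ → ℤ → V} {c : K} (hc : c ≠ 0)
    (h : ∀ x y, Z x (y - 1) = c • Z (x - 1) y) (M : ℤ) (hZ : ∀ x y, M ≤ x → Z x y = 0)
    (x y : ℤ) : Z x y = 0 := by
  have hk := iterate_of_rec h (M - x).toNat x y
  rw [hZ _ _ (by omega), eq_comm, smul_eq_zero] at hk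
  exact hk.resolve_left (pow_ne_zero _ hc)

theorem eq_zero_of_rec_of_eq_zero_below {Z : ℤ → ℤ → V} {c : K}
    (h : ∀ x y, Z x (y - 1) = c • Z (x - 1) y) (M : ℤ) (hZ : ∀ x y, x ≤ M → Z x y = 0)
    (x y : ℤ) : Z x y = 0 := by
  set k := (x - M).toNat
  have hk := iterate_of_rec h k (x - k) (y + k)
  rwa [sub_add_cancel, add_sub_cancel_right, hZ (x - k) (y + k) (by omega), smul_zero] at hk

theorem eq_zero_of_rec₂ {Z : ℤ → ℤ → V} {t : K} (ht : t ≠ 0)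
    (h : ∀ x y, Z x (y - 2) - (t * t + t⁻¹ * t⁻¹) • Z (x - 1) (y - 1) + Z (x - 2) y = 0)
    (M : ℤ) (hZ : ∀ x y, M ≤ x → Z x y = 0) (x y : ℤ) : Z x y = 0 := by
  -- the characteristic roots are `t²` and `t⁻²`: peel them off one at a time
  set Z₁ : ℤ → ℤ → V := fun x y => Z x (y - 1) - (t * t) • Z (x - 1) y
  have h₁ : ∀ x y, Z₁ x (y - 1) = (t⁻¹ * t⁻¹) • Z₁ (x - 1) y := by
    intro x y
    have hinv : (t⁻¹ * t⁻¹) * (t * t) = 1 := by field_simp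
    simp only [Z₁, smul_sub, smul_smul, hinv, one_smul, sub_sub,
      (by ring : (2 : ℤ) = 1 + 1)] at h ⊢
    linear_combination (norm := module) h x y
  refine eq_zero_of_rec_of_eq_zero_above (mul_ne_zero ht ht) (fun x y => ?_) M hZ x y
  rw [← sub_eq_zero]
  exact eq_zero_of_rec_of_eq_zero_above (by simp [ht]) h₁ (M + 1)
    (fun x y hx => by simp [Z₁, hZ _ _ (by omega : M ≤ x), hZ _ _ (by omega : M ≤ x - 1)]) x y

end Recursion

theorem zpow_injective_of_pow_ne_one {G : Type*} [GroupWithZero G] {q : G} (hq0 : q ≠ 0)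
    (hq : ∀ k : ℕ, k ≠ 0 → q ^ k ≠ 1) : Function.Injective (q ^ · : ℤ → G) := by
  intro a b hab
  have h1 : q ^ (a - b) = 1 := by
    simp only at hab
    rw [zpow_sub₀ hq0, hab, div_self (zpow_ne_zero _ hq0)]
  by_contra hne
  apply hq (a - b).natAbs (by omega)
  rcases Int.natAbs_eq (a - b) with h | h
  · rw [← zpow_natCast, ← h, h1]
  · rw [← zpow_natCast, ← neg_neg ((a - b).natAbs : ℤ), ← h, zpow_neg, h1, inv_one]

theorem Module.End.exists_common_eigenvector {K V ι : Type*} [Field K] [IsAlgClosed K]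
    [AddCommGroup V] [Module K V] [FiniteDimensional K V] [Nontrivial V]
    (f : ι → End K V) (hf : ∀ i j, Commute (f i) (f j)) :
    ∃ v : V, v ≠ 0 ∧ ∀ i, ∃ c : K, f i v = c • v := by
  induction hn : finrank K V using Nat.strong_induction_on generalizing V with
  | _ n ih =>
  by_cases hscalar : ∀ i, ∃ c : K, f i = c • 1
  · obtain ⟨v, hv⟩ := exists_ne (0 : V)
    refine ⟨v, hv, fun i => ?_⟩
    obtain ⟨c, hc⟩ := hscalar i
    exact ⟨c, by simp [hc]⟩
  push Not at hscalar
  obtain ⟨i₀, hi₀⟩ := hscalar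
  obtain ⟨μ, hμ⟩ := (f i₀).exists_eigenvalue
  -- a non-scalar `f i₀` has a proper eigenspace, which every `f i` preserves
  set E := (f i₀).eigenspace μ
  have hE : E ≠ ⊤ := fun htop => hi₀ μ <| LinearMap.ext fun v =>
    by simpa using Module.End.mem_eigenspace_iff.1 (htop ▸ Submodule.mem_top : v ∈ E)
  have : Nontrivial E := Submodule.nontrivial_iff_ne_bot.2 hμ
  have hmaps : ∀ i, Set.MapsTo (f i) E E := fun i =>
    Module.End.mapsTo_genEigenspace_of_comm (hf i₀ i) μ 1
  obtain ⟨w, hw, hwev⟩ := ih _ (hn ▸ Submodule.finrank_lt hE)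
    (fun i => (f i).restrict (hmaps i))
    (fun i j => LinearMap.ext fun x => Subtype.ext <| LinearMap.congr_fun (hf i j).eq x) rfl
  refine ⟨w, by simpa using hw, fun i => ?_⟩
  obtain ⟨c, hc⟩ := hwev i
  exact ⟨c, congrArg Subtype.val hc⟩

theorem surjective_apply_of_simple {K A V : Type*} [Field K] [Ring A] [Algebra K A]
    [AddCommGroup V] [Module K V] (ρ : A →ₐ[K] End K V)
    (hirr : ∀ W : Submodule K V, (∀ (x : A) (w : V), w ∈ W → ρ x w ∈ W) → W = ⊥ ∨ W = ⊤)
    {ζ : V} (hζ : ζ ≠ 0) : Function.Surjective fun x : A => ρ x ζ := by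
  let φ : A →ₗ[K] V := (LinearMap.applyₗ ζ).comp ρ.toLinearMap
  have hζφ : ζ ∈ LinearMap.range φ := ⟨1, by simp [φ]⟩
  rcases hirr (LinearMap.range φ) (by rintro x _ ⟨y, rfl⟩; exact ⟨x * y, by simp [φ]⟩) with h | h
  · exact absurd ((Submodule.mem_bot K).1 (h ▸ hζφ)) hζ
  · exact fun v => LinearMap.range_eq_top.1 h v

section Representation

variable {Nn : ℕ} {q : ℂ} {s : ℕ → ZMod 2} {V : Type} [AddCommGroup V] [Module ℂ V]
  (ρ : UA Nn q s →ₐ[ℂ] Module.End ℂ V)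

def coeffOp (g : Bool) (i j : ℕ) (z : ℤ) : Module.End ℂ V :=
  ρ (RingQuot.mkAlgHom ℂ (ARel Nn q s) (acf g i j z))

theorem coeffOp_false_of_pos {z : ℤ} (hz : 0 < z) (i j : ℕ) : coeffOp ρ false i j z = 0 := by
  simp [coeffOp, acf, not_le.mpr hz]

theorem coeffOp_true_of_neg {z : ℤ} (hz : z < 0) (i j : ℕ) : coeffOp ρ true i j z = 0 := by
  simp [coeffOp, acf, not_le.mpr hz]

theorem coeffOp_false_neg_natCast (i j r : ℕ) :
    coeffOp ρ false i j (-r) = ρ (AT Nn q s i j r) := by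
  simp [coeffOp, acf, AT]

theorem coeffOp_true_natCast (i j r : ℕ) : coeffOp ρ true i j r = ρ (AB Nn q s i j r) := by
  simp [coeffOp, acf, AB]

theorem coeffOp_false_zero_of_lt {i j : ℕ} (h : i < j) : coeffOp ρ false i j 0 = 0 := by
  simpa [coeffOp, acf] using
    congrArg ρ (RingQuot.mkAlgHom_rel ℂ (ARel.zt0 (Nn := Nn) (q := q) (s := s) i j h))

theorem coeffOp_of_not_inR {i j : ℕ} (h : ¬(inR Nn i ∧ inR Nn j)) (g : Bool) (z : ℤ) :
    coeffOp ρ g i j z = 0 := by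
  cases g
  · rcases le_or_gt z 0 with hz | hz
    · simpa [coeffOp, acf, hz] using congrArg ρ
        (RingQuot.mkAlgHom_rel ℂ (ARel.zt (Nn := Nn) (q := q) (s := s) i j (-z).toNat h))
    · exact coeffOp_false_of_pos ρ hz i j
  · rcases le_or_gt 0 z with hz | hz
    · simpa [coeffOp, acf, hz] using congrArg ρ
        (RingQuot.mkAlgHom_rel ℂ (ARel.zb (Nn := Nn) (q := q) (s := s) i j z.toNat h))
    · exact coeffOp_true_of_neg ρ hz i j

theorem coeffOp_true_zero_mul_false_zero {a : ℕ} (ha : inR Nn a) :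
    coeffOp ρ true a a 0 * coeffOp ρ false a a 0 = 1 := by
  simpa [coeffOp, acf] using
    congrArg ρ (RingQuot.mkAlgHom_rel ℂ (ARel.unit_bt (Nn := Nn) (q := q) (s := s) a ha))

theorem coeffOp_rtt (g g' : Bool) (hg : ¬(g = true ∧ g' = false)) {i j k l : ℕ}
    (hi : inR Nn i) (hj : inR Nn j) (hk : inR Nn k) (hl : inR Nn l) (x y : ℤ) (v : V) :
    (if i = k then (qp q s i)⁻¹ else 1) • coeffOp ρ g i j x (coeffOp ρ g' k l (y - 1) v)
      - (if i = k then qp q s i else 1) • coeffOp ρ g i j (x - 1) (coeffOp ρ g' k l y v)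
      - (sg s i j k l * (if j = l then (qp q s j)⁻¹ else 1)) •
          coeffOp ρ g' k l (y - 1) (coeffOp ρ g i j x v)
      + (sg s i j k l * (if j = l then qp q s j else 1)) •
          coeffOp ρ g' k l y (coeffOp ρ g i j (x - 1) v)
    = (sg s i k k l * (qp q s k - (qp q s k)⁻¹)) •
        ((if k < i then (1 : ℂ) else 0) • coeffOp ρ g k j (x - 1) (coeffOp ρ g' i l y v)
          + (if i < k then (1 : ℂ) else 0) • coeffOp ρ g k j x (coeffOp ρ g' i l (y - 1) v)
          - (if j < l then (1 : ℂ) else 0) • coeffOp ρ g' k j y (coeffOp ρ g i l (x - 1) v)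
          - (if l < j then (1 : ℂ) else 0) • coeffOp ρ g' k j (y - 1) (coeffOp ρ g i l x v)) := by
  have h := congrArg ρ <| RingQuot.mkAlgHom_rel ℂ <|
    ARel.rtt (Nn := Nn) (q := q) (s := s) g g' hg i j k l hi hj hk hl x y
  simpa only [relL, relR, map_sub, map_add, map_smul, map_mul, coeffOp,
    LinearMap.sub_apply, LinearMap.add_apply, LinearMap.smul_apply,
    Module.End.mul_apply] using LinearMap.congr_fun h v

end Representation

section Signs

variable {q : ℂ} {s : ℕ → ZMod 2}

theorem sg_self_left (a c d : ℕ) : sg s a a c d = 1 := by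
  simp [sg, neg1, ZModModule.add_self]

theorem sg_self_right (a b c : ℕ) : sg s a b c c = 1 := by
  simp [sg, neg1, ZModModule.add_self]

theorem sg_swap (p r : ℕ) : sg s p r r p = neg1 (s p + s r) := by
  rw [sg, add_comm (s r), (by decide : ∀ x : ZMod 2, x * x = x)]

theorem neg1_mul_self (x : ZMod 2) : neg1 x * neg1 x = 1 := by
  unfold neg1; split <;> norm_num

theorem qp_ne_zero (hq0 : q ≠ 0) (a : ℕ) : qp q s a ≠ 0 := by
  unfold qp; split <;> simp [hq0]

-- `q_r = q_p^{±1}` according as `|p| = |r|` or not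
theorem neg1_mul_qp_sub_inv (p r : ℕ) :
    neg1 (s p + s r) * (qp q s p - (qp q s p)⁻¹) = qp q s r - (qp q s r)⁻¹ := by
  rcases (by decide : ∀ x : ZMod 2, x = 0 ∨ x = 1) (s p) with hp | hp <;>
    rcases (by decide : ∀ x : ZMod 2, x = 0 ∨ x = 1) (s r) with hr | hr <;>
    simp [hp, hr, neg1, qp, (by decide : (1 + 1 : ZMod 2) = 0)]

def parityExp (s : ℕ → ZMod 2) (a : ℕ) : ℤ := if s a = 0 then 1 else -1

theorem parityExp_mul_self (a : ℕ) : parityExp s a * parityExp s a = 1 := by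
  unfold parityExp; split <;> norm_num

theorem qp_eq_zpow (a : ℕ) : qp q s a = q ^ parityExp s a := by
  unfold qp parityExp; split <;> simp

end Signs

section Commutation

variable {Nn : ℕ} {q : ℂ} {s : ℕ → ZMod 2} {V : Type} [AddCommGroup V] [Module ℂ V]
  (ρ : UA Nn q s →ₐ[ℂ] Module.End ℂ V)

theorem qp_smul_coeffOp_diag_zero_comm (g : Bool) {a b c : ℕ} (ha : inR Nn a) (hb : inR Nn b)
    (hc : inR Nn c) (y : ℤ) (v : V) :
    (if a = b then qp q s a else 1) • coeffOp ρ false a a 0 (coeffOp ρ g b c y v)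
      = (if a = c then qp q s a else 1) • coeffOp ρ g b c y (coeffOp ρ false a a 0 v) := by
  have h := coeffOp_rtt ρ false g (by simp) ha ha hb hc 1 y v
  have hba : (if b < a then (1 : ℂ) else 0) • coeffOp ρ false b a 0 (coeffOp ρ g a c y v) = 0 := by
    split_ifs with hba
    · rw [coeffOp_false_zero_of_lt ρ hba]; simp
    · simp
  have hac : (if a < c then (1 : ℂ) else 0) • coeffOp ρ g b a y (coeffOp ρ false a c 0 v) = 0 := by
    split_ifs with hac
    · rw [coeffOp_false_zero_of_lt ρ hac]; simp
    · simp
  simp only [coeffOp_false_of_pos ρ one_pos, sub_self, LinearMap.zero_apply, map_zero,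
    smul_zero, zero_sub, sg_self_left, one_mul, hba, hac, zero_add, sub_zero] at h
  linear_combination (norm := module) -h

theorem commute_coeffOp_false_zero (hq0 : q ≠ 0) (a b : ℕ) :
    Commute (coeffOp ρ false a a 0) (coeffOp ρ false b b 0) := by
  by_cases ha : inR Nn a
  · by_cases hb : inR Nn b
    · refine LinearMap.ext fun v => smul_right_injective V ?_
        (qp_smul_coeffOp_diag_zero_comm ρ false ha hb hb 0 v)
      split_ifs
      exacts [qp_ne_zero hq0 a, one_ne_zero]
    · simp [coeffOp_of_not_inR ρ (fun h => hb h.1)]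
  · simp [coeffOp_of_not_inR ρ (fun h => ha h.1)]

def IsSingular (v : V) : Prop :=
  ∀ (g : Bool) (b c : ℕ) (z : ℤ), b < c → inR Nn b → inR Nn c → coeffOp ρ g b c z v = 0

theorem coeffOp_comm_of_rec {g g' : Bool} {i j k l : ℕ}
    (v : V) {c : ℂ} (hc : c ≠ 0)
    (h : ∀ x y, coeffOp ρ g i j x (coeffOp ρ g' k l (y - 1) v)
        - coeffOp ρ g' k l (y - 1) (coeffOp ρ g i j x v)
      = c • (coeffOp ρ g i j (x - 1) (coeffOp ρ g' k l y v)
        - coeffOp ρ g' k l y (coeffOp ρ g i j (x - 1) v)))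
    (x y : ℤ) :
    coeffOp ρ g i j x (coeffOp ρ g' k l y v) = coeffOp ρ g' k l y (coeffOp ρ g i j x v) := by
  set Z : ℤ → ℤ → V := fun x y =>
    coeffOp ρ g i j x (coeffOp ρ g' k l y v) - coeffOp ρ g' k l y (coeffOp ρ g i j x v)
  rw [← sub_eq_zero]
  change Z x y = 0
  cases g
  · exact eq_zero_of_rec_of_eq_zero_above hc h 1
      (fun x y hx => by simp [Z, coeffOp_false_of_pos ρ (by omega : (0 : ℤ) < x)]) x y
  · exact eq_zero_of_rec_of_eq_zero_below h (-1)
      (fun x y hx => by simp [Z, coeffOp_true_of_neg ρ (by omega : x < 0)]) x y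

theorem coeffOp_diag_comm_self (hq0 : q ≠ 0) {g g' : Bool} (hg : ¬(g = true ∧ g' = false))
    {p : ℕ} (hp : inR Nn p) (v : V) (x y : ℤ) :
    coeffOp ρ g p p x (coeffOp ρ g' p p y v) = coeffOp ρ g' p p y (coeffOp ρ g p p x v) := by
  have hp0 := qp_ne_zero hq0 (s := s) p
  refine coeffOp_comm_of_rec ρ v (c := qp q s p * qp q s p) (mul_ne_zero hp0 hp0)
    (fun x y => ?_) x y
  have h := coeffOp_rtt ρ g g' hg hp hp hp hp x y v
  simp only [if_true, lt_self_iff_false, if_false, sg_self_left, one_mul,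
    zero_smul, add_zero, sub_zero] at h
  linear_combination (norm := module) qp q s p • h - mul_inv_cancel₀ hp0 •
    (coeffOp ρ g p p x (coeffOp ρ g' p p (y - 1) v)
      - coeffOp ρ g' p p (y - 1) (coeffOp ρ g p p x v))

theorem coeffOp_diag_comm_of_lt {g g' : Bool} (hg : ¬(g = true ∧ g' = false)) {p r : ℕ}
    (hp : inR Nn p) (hr : inR Nn r) (hpr : p < r) {v : V} (hv : IsSingular ρ v) (x y : ℤ) :
    coeffOp ρ g p p x (coeffOp ρ g' r r y v) = coeffOp ρ g' r r y (coeffOp ρ g p p x v) := by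
  refine coeffOp_comm_of_rec ρ v one_ne_zero (fun x y => ?_) x y
  have h := coeffOp_rtt ρ g g' hg hp hp hr hr x y v
  simp only [if_neg hpr.ne, if_pos hpr, if_neg hpr.not_gt, sg_self_left, sg_self_right, one_mul,
    one_smul, smul_zero, add_zero, sub_zero, fun g z => hv g p r z hpr hp hr, map_zero] at h
  linear_combination (norm := module) h

-- Eliminating the cross terms `t_{rp} t̄_{pr}` and `t̄_{rp} t_{pr}` between the RTT relations at
-- `(p,p,r,r)`, `(p,r,r,p)` and `(r,p,p,r)` leaves a recursion for `Z` alone.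
theorem coeffOp_diag_comm_rec₂_of_gt (hq0 : q ≠ 0) {p r : ℕ} (hp : inR Nn p) (hr : inR Nn r)
    (hrp : r < p) {v : V} (hv : IsSingular ρ v) (x y : ℤ) :
    let Z : ℤ → ℤ → V := fun x y => coeffOp ρ false p p x (coeffOp ρ true r r y v)
      - coeffOp ρ true r r y (coeffOp ρ false p p x v)
    Z x (y - 2) - (qp q s r * qp q s r + (qp q s r)⁻¹ * (qp q s r)⁻¹) • Z (x - 1) (y - 1)
      + Z (x - 2) y = 0 := by
  intro Z
  have hv' : ∀ g z, coeffOp ρ g r p z v = 0 := fun g z => hv g r p z hrp hr hp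
  set t := qp q s r
  set κ := t - t⁻¹
  set σ := neg1 (s p + s r)
  set X : ℤ → ℤ → V := fun x y => coeffOp ρ false p p x (coeffOp ρ true r r y v)
  set Y : ℤ → ℤ → V := fun x y => coeffOp ρ true r r y (coeffOp ρ false p p x v)
  set X' : ℤ → ℤ → V := fun x y => coeffOp ρ false r r x (coeffOp ρ true p p y v)
  set P : ℤ → ℤ → V := fun x y => coeffOp ρ false r p x (coeffOp ρ true p r y v)
  set Q : ℤ → ℤ → V := fun x y => coeffOp ρ true r p y (coeffOp ρ false p r x v)
  have hX' : ∀ x y, X' x y = coeffOp ρ true p p y (coeffOp ρ false r r x v) :=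
    coeffOp_diag_comm_of_lt ρ (by simp) hr hp hrp hv
  have K₁ : ∀ x y, X x (y - 1) - X (x - 1) y - Y x (y - 1) + Y (x - 1) y
      = κ • (P (x - 1) y - Q x (y - 1)) := by
    intro x y
    have h := coeffOp_rtt ρ false true (by simp) hp hp hr hr x y v
    simp only [if_neg hrp.ne', sg_self_left, sg_self_right, one_mul, one_smul, if_pos hrp,
      if_neg hrp.not_gt, zero_smul, add_zero, sub_zero] at h
    linear_combination (norm := module) h
  have K₂ : ∀ x y, Q x (y - 1) - Q (x - 1) y = κ • (Y (x - 1) y - X' (x - 1) y) := by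
    intro x y
    have h := coeffOp_rtt ρ false true (by simp) hp hr hr hp x y v
    simp only [if_neg hrp.ne', if_neg hrp.ne, sg_swap, one_smul, if_pos hrp, if_neg hrp.not_gt,
      zero_smul, smul_zero, add_zero, sub_zero, zero_sub, hv', map_zero] at h
    have hσ : σ * σ = 1 := neg1_mul_self _
    linear_combination (norm := module) -(σ • h) + hσ • (Q (x - 1) y - Q x (y - 1))
      - hσ • (κ • (X' (x - 1) y - Y (x - 1) y))
  have K₃ : ∀ x y, P x (y - 1) - P (x - 1) y = κ • (X x (y - 1) - X' x (y - 1)) := by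
    intro x y
    have h := coeffOp_rtt ρ false true (by simp) hr hp hp hr x y v
    simp only [if_neg hrp.ne', if_neg hrp.ne, sg_swap, one_smul, if_pos hrp, if_neg hrp.not_gt,
      zero_smul, smul_zero, zero_add, add_zero, sub_zero, hv', map_zero, add_comm (s r),
      neg1_mul_qp_sub_inv] at h
    rw [← hX'] at h
    linear_combination (norm := module) h
  have h₁ := K₁ x (y - 1)
  have h₂ := K₁ (x - 1) y
  have h₃ := K₃ (x - 1) y
  have h₄ := K₂ x (y - 1)
  simp only [Z, sub_sub, (by ring : (2 : ℤ) = 1 + 1)] at h₁ h₂ h₃ h₄ ⊢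
  linear_combination (norm := module) h₁ - h₂ + κ • h₃ - κ • h₄
    - (2 : ℂ) • mul_inv_cancel₀ (qp_ne_zero hq0 r) • (X (x - 1) (y - 1) - Y (x - 1) (y - 1))

theorem coeffOp_diag_comm_of_gt (hq0 : q ≠ 0) {p r : ℕ} (hp : inR Nn p) (hr : inR Nn r)
    (hrp : r < p) {v : V} (hv : IsSingular ρ v) (x y : ℤ) :
    coeffOp ρ false p p x (coeffOp ρ true r r y v)
      = coeffOp ρ true r r y (coeffOp ρ false p p x v) :=
  sub_eq_zero.1 <| eq_zero_of_rec₂ (Z := fun x y => coeffOp ρ false p p x (coeffOp ρ true r r y v)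
      - coeffOp ρ true r r y (coeffOp ρ false p p x v)) (qp_ne_zero hq0 r)
    (coeffOp_diag_comm_rec₂_of_gt ρ hq0 hp hr hrp hv) 1
    (fun x y hx => by simp [coeffOp_false_of_pos ρ (by omega : (0 : ℤ) < x)]) x y

theorem IsSingular.coeffOp_diag_comm (hq0 : q ≠ 0) {v : V} (hv : IsSingular ρ v)
    (g g' : Bool) (p r : ℕ) (z z' : ℤ) :
    coeffOp ρ g p p z (coeffOp ρ g' r r z' v) = coeffOp ρ g' r r z' (coeffOp ρ g p p z v) := by
  by_cases hp : inR Nn p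
  swap; · simp [coeffOp_of_not_inR ρ (fun h => hp h.1)]
  by_cases hr : inR Nn r
  swap; · simp [coeffOp_of_not_inR ρ (fun h => hr h.1)]
  rcases lt_trichotomy p r with hpr | rfl | hrp <;> cases g <;> cases g'
  · exact coeffOp_diag_comm_of_lt ρ (by simp) hp hr hpr hv z z'
  · exact coeffOp_diag_comm_of_lt ρ (by simp) hp hr hpr hv z z'
  · exact (coeffOp_diag_comm_of_gt ρ hq0 hr hp hpr hv z' z).symm
  · exact coeffOp_diag_comm_of_lt ρ (by simp) hp hr hpr hv z z'
  · exact coeffOp_diag_comm_self ρ hq0 (by simp) hp v z z'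
  · exact coeffOp_diag_comm_self ρ hq0 (by simp) hp v z z'
  · exact (coeffOp_diag_comm_self ρ hq0 (by simp) hp v z' z).symm
  · exact coeffOp_diag_comm_self ρ hq0 (by simp) hp v z z'
  · exact (coeffOp_diag_comm_of_lt ρ (by simp) hr hp hrp hv z' z).symm
  · exact coeffOp_diag_comm_of_gt ρ hq0 hp hr hrp hv z z'
  · exact (coeffOp_diag_comm_of_lt ρ (by simp) hr hp hrp hv z' z).symm
  · exact (coeffOp_diag_comm_of_lt ρ (by simp) hr hp hrp hv z' z).symm

end Commutation

section Weights

variable {Nn : ℕ} {q : ℂ} {s : ℕ → ZMod 2} {V : Type} [AddCommGroup V] [Module ℂ V]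
  (ρ : UA Nn q s →ₐ[ℂ] Module.End ℂ V)

def weightSpace (μ : ℕ → ℂ) : Submodule ℂ V :=
  ⨅ (a : ℕ) (_ : inR Nn a), (coeffOp ρ false a a 0).eigenspace (μ a)

theorem mem_weightSpace {μ : ℕ → ℂ} {v : V} :
    v ∈ weightSpace ρ μ ↔ ∀ a, inR Nn a → coeffOp ρ false a a 0 v = μ a • v := by
  simp [weightSpace]

theorem weightSpace_apply_ne_zero {μ : ℕ → ℂ} (h : weightSpace ρ μ ≠ ⊥) {a : ℕ}
    (ha : inR Nn a) : μ a ≠ 0 := by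
  obtain ⟨v, hv, hv0⟩ := Submodule.exists_mem_ne_zero_of_ne_bot h
  intro hμ
  apply hv0
  have := LinearMap.congr_fun (coeffOp_true_zero_mul_false_zero ρ ha) v
  rwa [Module.End.mul_apply, (mem_weightSpace ρ).1 hv a ha, hμ, zero_smul, map_zero, eq_comm]
    at this

/-- The exponent of `q` by which `γ_{bc}` multiplies the `a`-th weight coordinate. -/
def raiseExp (s : ℕ → ZMod 2) (b c a : ℕ) : ℤ :=
  (if a = c then parityExp s a else 0) - (if a = b then parityExp s a else 0)

theorem mapsTo_weightSpace (hq0 : q ≠ 0) (g : Bool) {b c : ℕ} (hb : inR Nn b) (hc : inR Nn c)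
    (z : ℤ) (μ : ℕ → ℂ) (e : ℕ → ℤ) :
    Set.MapsTo (coeffOp ρ g b c z) (weightSpace ρ fun a => q ^ e a * μ a)
      (weightSpace ρ fun a => q ^ (e a + raiseExp s b c a) * μ a) := by
  intro v hv
  rw [SetLike.mem_coe, mem_weightSpace] at hv ⊢
  intro a ha
  have hzpow : ∀ d : Prop, [Decidable d] →
      q ^ (if d then parityExp s a else 0) = if d then qp q s a else 1 := by
    intro d _; split_ifs <;> simp [qp_eq_zpow]
  have hb' : (if a = b then qp q s a else 1) ≠ 0 := by
    split_ifs; exacts [qp_ne_zero hq0 a, one_ne_zero]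
  have h := qp_smul_coeffOp_diag_zero_comm ρ g ha hb hc z v
  rw [hv a ha, map_smul, smul_smul] at h
  rw [← inv_smul_smul₀ hb' (coeffOp ρ false a a 0 _), h, smul_smul, raiseExp,
    zpow_add₀ hq0, zpow_sub₀ hq0, hzpow, hzpow]
  congr 1
  field_simp

theorem mapsTo_weightSpace_diag (hq0 : q ≠ 0) (g : Bool) (p : ℕ) (z : ℤ) (μ : ℕ → ℂ) :
    Set.MapsTo (coeffOp ρ g p p z) (weightSpace ρ μ) (weightSpace ρ μ) := by
  by_cases hp : inR Nn p
  · simpa [raiseExp] using mapsTo_weightSpace ρ hq0 g hp hp z μ 0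
  · simp [coeffOp_of_not_inR ρ (fun h => hp h.1), Set.MapsTo]

def height (Nn : ℕ) (s : ℕ → ZMod 2) (e : ℕ → ℤ) : ℤ :=
  ∑ a ∈ Finset.Icc 1 Nn, a * parityExp s a * e a

theorem height_add_raiseExp {b c : ℕ} (hb : inR Nn b) (hc : inR Nn c) (e : ℕ → ℤ) :
    height Nn s (fun a => e a + raiseExp s b c a) = height Nn s e + c - b := by
  have hmem : ∀ {i}, inR Nn i → i ∈ Finset.Icc 1 Nn := fun h => Finset.mem_Icc.2 h
  simp only [height, raiseExp, mul_add, mul_sub, Finset.sum_add_distrib, Finset.sum_sub_distrib,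
    mul_ite, mul_zero, mul_assoc, parityExp_mul_self, mul_one, Finset.sum_ite_eq',
    hmem hb, hmem hc, if_true]
  ring

theorem finite_exponents [FiniteDimensional ℂ V] (hq0 : q ≠ 0)
    (hq : ∀ k : ℕ, k ≠ 0 → q ^ k ≠ 1) {μ : ℕ → ℂ} (hμ : weightSpace ρ μ ≠ ⊥) :
    {e : ℕ → ℤ | (∀ a, ¬inR Nn a → e a = 0) ∧
      weightSpace ρ (fun a => q ^ e a * μ a) ≠ ⊥}.Finite := by
  let f : (ℕ → ℤ) → Finset.Icc 1 Nn → ℂ := fun e a => q ^ e a * μ a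
  have hpi := Set.Finite.pi (t := fun a : Finset.Icc 1 Nn =>
    {c | (coeffOp ρ false a a 0).HasEigenvalue c}) fun a => Module.End.finite_hasEigenvalue _
  refine Set.Finite.of_finite_image (f := f) (hpi.subset ?_) ?_
  · rintro _ ⟨e, ⟨-, he⟩, rfl⟩
    obtain ⟨v, hv, hv0⟩ := Submodule.exists_mem_ne_zero_of_ne_bot he
    exact fun a _ => Module.End.hasEigenvalue_of_hasEigenvector
      ⟨Module.End.mem_eigenspace_iff.2 ((mem_weightSpace ρ).1 hv a (Finset.mem_Icc.1 a.2)), hv0⟩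
  · rintro e ⟨he0, -⟩ e' ⟨he0', -⟩ hee'
    funext a
    by_cases ha : inR Nn a
    · exact zpow_injective_of_pow_ne_one hq0 hq <| mul_right_cancel₀
        (weightSpace_apply_ne_zero ρ hμ ha) (congrFun hee' ⟨a, Finset.mem_Icc.2 ha⟩)
    · rw [he0 a ha, he0' a ha]

-- Raising operators increase the height, so they kill the weight space of maximal height.
theorem exists_weightSpace_isSingular [FiniteDimensional ℂ V] (hq0 : q ≠ 0)
    (hq : ∀ k : ℕ, k ≠ 0 → q ^ k ≠ 1) {μ₀ : ℕ → ℂ} (hμ₀ : weightSpace ρ μ₀ ≠ ⊥) :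
    ∃ μ, weightSpace ρ μ ≠ ⊥ ∧ ∀ v ∈ weightSpace ρ μ, IsSingular ρ v := by
  obtain ⟨e, ⟨he0, he⟩, hmax⟩ := Set.exists_max_image _ (height Nn s)
    (finite_exponents ρ hq0 hq hμ₀) ⟨0, fun _ _ => rfl, by simpa using hμ₀⟩
  refine ⟨_, he, fun v hv g b c z hbc hb hc => ?_⟩
  have hbot : weightSpace ρ (fun a => q ^ (e a + raiseExp s b c a) * μ₀ a) = ⊥ := by
    by_contra hne
    have := hmax _ ⟨fun a ha => ?_, hne⟩
    · rw [height_add_raiseExp hb hc] at this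
      omega
    · have hab : a ≠ b := fun h => ha (h ▸ hb)
      have hac : a ≠ c := fun h => ha (h ▸ hc)
      simp [he0 a ha, raiseExp, hab, hac]
  simpa [hbot] using mapsTo_weightSpace ρ hq0 g hb hc z μ₀ e hv

end Weights

theorem fd_simple_is_highest_weight_general (Nn : ℕ)
    (s : ℕ → ZMod 2)
    (q : ℂ) (hq0 : q ≠ 0) (hqru : ∀ k : ℕ, k ≠ 0 → q ^ k ≠ 1)
    (V : Type) [AddCommGroup V] [Module ℂ V] [FiniteDimensional ℂ V]
    (ρ : UA Nn q s →ₐ[ℂ] Module.End ℂ V)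
    (hne : ∃ v : V, v ≠ 0)
    (hirr : ∀ W : Submodule ℂ V,
      (∀ (x : UA Nn q s) (w : V), w ∈ W → ρ x w ∈ W) → W = ⊥ ∨ W = ⊤) :
    ∃ ζ : V, ζ ≠ 0 ∧ ∃ lam lamb : ℕ → ℕ → ℂ,
      (∀ i j r : ℕ, 1 ≤ i → i < j → j ≤ Nn →
        ρ (AT Nn q s i j r) ζ = 0 ∧ ρ (AB Nn q s i j r) ζ = 0) ∧
      (∀ i r : ℕ, 1 ≤ i → i ≤ Nn →
        ρ (AT Nn q s i i r) ζ = lam i r • ζ ∧ ρ (AB Nn q s i i r) ζ = lamb i r • ζ) ∧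
      Function.Surjective (fun x : UA Nn q s => ρ x ζ) := by
  obtain ⟨v, hv⟩ := hne
  have : Nontrivial V := ⟨v, 0, hv⟩
  obtain ⟨w₀, hw₀, hw₀ev⟩ := Module.End.exists_common_eigenvector
    (fun a => coeffOp ρ false a a 0) (commute_coeffOp_false_zero ρ hq0)
  choose μ₀ hμ₀ using hw₀ev
  obtain ⟨μ, hμ, hsing⟩ := exists_weightSpace_isSingular ρ hq0 hqru (μ₀ := μ₀)
    (Submodule.ne_bot_iff _ |>.2 ⟨w₀, (mem_weightSpace ρ).2 fun a _ => hμ₀ a, hw₀⟩)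
  have : Nontrivial (weightSpace ρ μ) := Submodule.nontrivial_iff_ne_bot.2 hμ
  obtain ⟨⟨ζ, hζμ⟩, hζ, hζev⟩ := Module.End.exists_common_eigenvector
    (fun x : Bool × ℕ × ℤ => (coeffOp ρ x.1 x.2.1 x.2.1 x.2.2).restrict
      (mapsTo_weightSpace_diag ρ hq0 x.1 x.2.1 x.2.2 μ))
    (fun x y => LinearMap.ext fun w => Subtype.ext <|
      (hsing w w.2).coeffOp_diag_comm ρ hq0 x.1 y.1 x.2.1 y.2.1 x.2.2 y.2.2)
  choose lam hlam using hζev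
  have hζ0 : ζ ≠ 0 := fun h => hζ (Subtype.ext h)
  refine ⟨ζ, hζ0, fun i r => lam (false, i, -r), fun i r => lam (true, i, r), ?_, ?_,
    surjective_apply_of_simple ρ hirr hζ0⟩
  · intro i j r hi hij hj
    rw [← coeffOp_false_neg_natCast, ← coeffOp_true_natCast]
    exact ⟨hsing ζ hζμ false i j _ hij ⟨hi, by omega⟩ ⟨by omega, hj⟩,
      hsing ζ hζμ true i j _ hij ⟨hi, by omega⟩ ⟨by omega, hj⟩⟩
  · intro i r _ _
    rw [← coeffOp_false_neg_natCast, ← coeffOp_true_natCast]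
    exact ⟨congrArg Subtype.val (hlam (false, i, -r)), congrArg Subtype.val (hlam (true, i, r))⟩

/-- Every nonzero finite-dimensional simple module over
`U_q(ĝl_{m|n,s})` is a highest weight module. -/
theorem fd_simple_is_highest_weight (m n Nn : ℕ) (hNn : Nn = m + n) (hN2 : 2 ≤ Nn)
    (s : ℕ → ZMod 2)
    (hm : ((Finset.Icc 1 Nn).filter (fun i => s i = 0)).card = m)
    (hn : ((Finset.Icc 1 Nn).filter (fun i => s i = 1)).card = n)
    (q : ℂ) (hq0 : q ≠ 0) (hqru : ∀ k : ℕ, k ≠ 0 → q ^ k ≠ 1)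
    (V : Type) [AddCommGroup V] [Module ℂ V] [FiniteDimensional ℂ V]
    (ρ : UA Nn q s →ₐ[ℂ] Module.End ℂ V)
    (hne : ∃ v : V, v ≠ 0)
    (hirr : ∀ W : Submodule ℂ V,
      (∀ (x : UA Nn q s) (w : V), w ∈ W → ρ x w ∈ W) → W = ⊥ ∨ W = ⊤) :
    ∃ ζ : V, ζ ≠ 0 ∧ ∃ lam lamb : ℕ → ℕ → ℂ,
      (∀ i j r : ℕ, 1 ≤ i → i < j → j ≤ Nn →
        ρ (AT Nn q s i j r) ζ = 0 ∧ ρ (AB Nn q s i j r) ζ = 0) ∧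
      (∀ i r : ℕ, 1 ≤ i → i ≤ Nn →
        ρ (AT Nn q s i i r) ζ = lam i r • ζ ∧ ρ (AB Nn q s i i r) ζ = lamb i r • ζ) ∧
      Function.Surjective (fun x : UA Nn q s => ρ x ζ) :=
  fd_simple_is_highest_weight_general Nn s q hq0 hqru V ρ hne hirr

end

end Stmt14
end
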